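/- arXiv:1705.02853 — 10 statements merged into one kernel-verified Lean document; each statement's English description precedes it below -/
import Mathlib

section
/- Let A ⊆ ℝⁿ be an order-convex set. Define the set of maximal elements ∂₊A = {y ∈ frontier(A) : for every z with y ≪ z one has z ∉ A} and the set of minimal elements ∂₋A = {y ∈ frontier(A) : for every z with z ≪ y one has z ∉ A}. Then the topological boundary of A is exactly the union of these two sets: frontier(A) = ∂₊A ∪ ∂₋A. -/
/-- For an order-convex set `A ⊆ ℝⁿ`, the topological boundary of `A`
is exactly the union of the set of maximal elements
`∂₊A = {y ∈ frontier A | ∀ z, y ≪ z → z ∉ A}` and the set of minimal elements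
`∂₋A = {y ∈ frontier A | ∀ z, z ≪ y → z ∉ A}`. -/
theorem frontier_eq_maximal_union_minimal_of_orderConvex {n : ℕ}
    (A : Set (Fin n → ℝ))
    (hA : ∀ x ∈ A, ∀ y ∈ A, Set.Icc x y ⊆ A) :
    frontier A =
      {y ∈ frontier A | ∀ z : Fin n → ℝ, (∀ i, y i < z i) → z ∉ A} ∪
      {y ∈ frontier A | ∀ z : Fin n → ℝ, (∀ i, z i < y i) → z ∉ A} := by
  ext y
  constructor
  · intro hy
    by_contra h
    simp only [Set.mem_union, Set.mem_setOf_eq, not_or, not_and, not_forall, not_not] at h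
    obtain ⟨a, ha, haA⟩ := h.1 hy
    obtain ⟨b, hb, hbA⟩ := h.2 hy
    -- y is in the open set Ioo b a ⊆ Icc b a ⊆ A
    have hopen : IsOpen {x : Fin n → ℝ | ∀ i, b i < x i ∧ x i < a i} := by
      have : {x : Fin n → ℝ | ∀ i, b i < x i ∧ x i < a i}
          = ⋂ i, {x : Fin n → ℝ | b i < x i ∧ x i < a i} := by
        ext x; simp [Set.mem_iInter]
      rw [this]
      exact isOpen_iInter_of_finite fun i =>
        (isOpen_lt continuous_const (continuous_apply i)).inter
          (isOpen_lt (continuous_apply i) continuous_const)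
    have hsub : {x : Fin n → ℝ | ∀ i, b i < x i ∧ x i < a i} ⊆ A := by
      intro x hx
      exact hA b hbA a haA ⟨fun i => (hx i).1.le, fun i => (hx i).2.le⟩
    have hyint : y ∈ interior A :=
      interior_mono hsub (by rw [hopen.interior_eq]; exact fun i => ⟨hb i, ha i⟩)
    exact hy.2 hyint
  · rintro (⟨h, _⟩ | ⟨h, _⟩) <;> exact h
end

section
/- Every nonempty, path-connected, order-convex subset of ℝ² (with the componentwise order) is simply connected. -/
open unitInterval

/-- median of three reals -/
noncomputable def med3 (a b c : ℝ) : ℝ := max (min a b) (min (max a b) c)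

lemma med3_min12 (a b c : ℝ) : min a b ≤ med3 a b c := le_max_left _ _

lemma med3_max12 (a b c : ℝ) : med3 a b c ≤ max a b :=
  max_le (min_le_max) (min_le_left _ _)

lemma med3_min13 (a b c : ℝ) : min a c ≤ med3 a b c := by
  unfold med3
  rcases le_total a b with h | h <;> rcases le_total b c with h1 | h1 <;>
    rcases le_total a c with h2 | h2 <;>
    simp [min_def, max_def] <;> split_ifs <;> linarith

lemma med3_max13 (a b c : ℝ) : med3 a b c ≤ max a c := by
  unfold med3
  rcases le_total a b with h | h <;> rcases le_total b c with h1 | h1 <;>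
    rcases le_total a c with h2 | h2 <;>
    simp [min_def, max_def] <;> split_ifs <;> linarith

lemma med3_min23 (a b c : ℝ) : min b c ≤ med3 a b c := by
  unfold med3
  rcases le_total a b with h | h <;> rcases le_total b c with h1 | h1 <;>
    rcases le_total a c with h2 | h2 <;>
    simp [min_def, max_def] <;> split_ifs <;> linarith

lemma med3_max23 (a b c : ℝ) : med3 a b c ≤ max b c := by
  unfold med3
  rcases le_total a b with h | h <;> rcases le_total b c with h1 | h1 <;>
    rcases le_total a c with h2 | h2 <;>
    simp [min_def, max_def] <;> split_ifs <;> linarith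

lemma med3_mid1 {a b c : ℝ} (h : (b ≤ a ∧ a ≤ c) ∨ (c ≤ a ∧ a ≤ b)) : med3 a b c = a := by
  unfold med3
  rcases h with ⟨h1, h2⟩ | ⟨h1, h2⟩ <;> simp [min_def, max_def] <;> split_ifs <;> linarith

lemma med3_mid2 {a b c : ℝ} (h : (a ≤ b ∧ b ≤ c) ∨ (c ≤ b ∧ b ≤ a)) : med3 a b c = b := by
  unfold med3
  rcases h with ⟨h1, h2⟩ | ⟨h1, h2⟩ <;> simp [min_def, max_def] <;> split_ifs <;> linarith

lemma med3_mid3 {a b c : ℝ} (h : (a ≤ c ∧ c ≤ b) ∨ (b ≤ c ∧ c ≤ a)) : med3 a b c = c := by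
  unfold med3
  rcases h with ⟨h1, h2⟩ | ⟨h1, h2⟩ <;> simp [min_def, max_def] <;> split_ifs <;> linarith

lemma med3_abb (a b : ℝ) : med3 a b b = b := by
  rcases le_total a b with h | h
  · exact med3_mid2 (Or.inl ⟨h, le_refl b⟩)
  · exact med3_mid2 (Or.inr ⟨le_refl b, h⟩)

lemma med3_aba (a b : ℝ) : med3 a b a = a := by
  rcases le_total b a with h | h
  · exact med3_mid1 (Or.inl ⟨h, le_refl a⟩)
  · exact med3_mid1 (Or.inr ⟨le_refl a, h⟩)

lemma med3_aac (a c : ℝ) : med3 a a c = a := by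
  rcases le_total a c with h | h
  · exact med3_mid1 (Or.inl ⟨le_refl a, h⟩)
  · exact med3_mid1 (Or.inr ⟨h, le_refl a⟩)

/-- componentwise median -/
noncomputable def medF (x y z : Fin 2 → ℝ) : Fin 2 → ℝ := fun i => med3 (x i) (y i) (z i)

lemma cmp_or (u v : Fin 2 → ℝ) :
    (∀ i, u i ≤ v i) ∨ (∀ i, v i ≤ u i) ∨
      (u 0 < v 0 ∧ v 1 < u 1) ∨ (v 0 < u 0 ∧ u 1 < v 1) := by
  simp only [Fin.forall_fin_two]
  rcases lt_trichotomy (u 0) (v 0) with h0 | h0 | h0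
  · rcases lt_trichotomy (u 1) (v 1) with h1 | h1 | h1
    · exact Or.inl ⟨h0.le, h1.le⟩
    · exact Or.inl ⟨h0.le, h1.le⟩
    · exact Or.inr (Or.inr (Or.inl ⟨h0, h1⟩))
  · rcases le_total (u 1) (v 1) with h1 | h1
    · exact Or.inl ⟨h0.le, h1⟩
    · exact Or.inr (Or.inl ⟨h0.ge, h1⟩)
  · rcases lt_trichotomy (u 1) (v 1) with h1 | h1 | h1
    · exact Or.inr (Or.inr (Or.inr ⟨h0, h1⟩))
    · exact Or.inr (Or.inl ⟨h0.le, h1.ge⟩)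
    · exact Or.inr (Or.inl ⟨h0.le, h1.le⟩)

lemma medF_mem {A : Set (Fin 2 → ℝ)}
    (hA : ∀ x ∈ A, ∀ y ∈ A, Set.Icc x y ⊆ A)
    {x y z : Fin 2 → ℝ} (hx : x ∈ A) (hy : y ∈ A) (hz : z ∈ A) :
    medF x y z ∈ A := by
  rcases cmp_or x y with hxy | hxy | hxy | hxy
  · exact hA x hx y hy ⟨fun i => (min_eq_left (hxy i)) ▸ med3_min12 _ _ _,
      fun i => le_trans (med3_max12 _ _ _) (le_of_eq (max_eq_right (hxy i)))⟩
  · exact hA y hy x hx ⟨fun i => (min_eq_right (hxy i)) ▸ med3_min12 _ _ _,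
      fun i => le_trans (med3_max12 _ _ _) (le_of_eq (max_eq_left (hxy i)))⟩
  all_goals
    rcases cmp_or x z with hxz | hxz | hxz | hxz
    · exact hA x hx z hz ⟨fun i => (min_eq_left (hxz i)) ▸ med3_min13 _ _ _,
        fun i => le_trans (med3_max13 _ _ _) (le_of_eq (max_eq_right (hxz i)))⟩
    · exact hA z hz x hx ⟨fun i => (min_eq_right (hxz i)) ▸ med3_min13 _ _ _,
        fun i => le_trans (med3_max13 _ _ _) (le_of_eq (max_eq_left (hxz i)))⟩
    all_goals
      rcases cmp_or y z with hyz | hyz | hyz | hyz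
      · exact hA y hy z hz ⟨fun i => (min_eq_left (hyz i)) ▸ med3_min23 _ _ _,
          fun i => le_trans (med3_max23 _ _ _) (le_of_eq (max_eq_right (hyz i)))⟩
      · exact hA z hz y hy ⟨fun i => (min_eq_right (hyz i)) ▸ med3_min23 _ _ _,
          fun i => le_trans (med3_max23 _ _ _) (le_of_eq (max_eq_left (hyz i)))⟩
      all_goals
        first
        | (exfalso; linarith [hxy.1, hxy.2, hxz.1, hxz.2, hyz.1, hyz.2])
        | (unfold medF
           have h' : (fun i => med3 (x i) (y i) (z i)) = x := by
             apply funext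
             rw [Fin.forall_fin_two]
             constructor <;>
               exact med3_mid1 (by
                 first
                 | (left; exact ⟨by linarith [hxy.1, hxy.2, hxz.1, hxz.2, hyz.1, hyz.2], by linarith [hxy.1, hxy.2, hxz.1, hxz.2, hyz.1, hyz.2]⟩)
                 | (right; exact ⟨by linarith [hxy.1, hxy.2, hxz.1, hxz.2, hyz.1, hyz.2], by linarith [hxy.1, hxy.2, hxz.1, hxz.2, hyz.1, hyz.2]⟩))
           rw [h']
           exact hx)
        | (unfold medF
           have h' : (fun i => med3 (x i) (y i) (z i)) = y := by
             apply funext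
             rw [Fin.forall_fin_two]
             constructor <;>
               exact med3_mid2 (by
                 first
                 | (left; exact ⟨by linarith [hxy.1, hxy.2, hxz.1, hxz.2, hyz.1, hyz.2], by linarith [hxy.1, hxy.2, hxz.1, hxz.2, hyz.1, hyz.2]⟩)
                 | (right; exact ⟨by linarith [hxy.1, hxy.2, hxz.1, hxz.2, hyz.1, hyz.2], by linarith [hxy.1, hxy.2, hxz.1, hxz.2, hyz.1, hyz.2]⟩))
           rw [h']
           exact hy)
        | (unfold medF
           have h' : (fun i => med3 (x i) (y i) (z i)) = z := by
             apply funext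
             rw [Fin.forall_fin_two]
             constructor <;>
               exact med3_mid3 (by
                 first
                 | (left; exact ⟨by linarith [hxy.1, hxy.2, hxz.1, hxz.2, hyz.1, hyz.2], by linarith [hxy.1, hxy.2, hxz.1, hxz.2, hyz.1, hyz.2]⟩)
                 | (right; exact ⟨by linarith [hxy.1, hxy.2, hxz.1, hxz.2, hyz.1, hyz.2], by linarith [hxy.1, hxy.2, hxz.1, hxz.2, hyz.1, hyz.2]⟩))
           rw [h']
           exact hz)
/-- Every nonempty, path-connected, order-convex subset of `ℝ²`
(with the componentwise order) is simply connected. -/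
theorem simplyConnected_of_orderConvex_pathConnected
    (A : Set (Fin 2 → ℝ))
    (hne : A.Nonempty)
    (hpc : IsPathConnected A)
    (hA : ∀ x ∈ A, ∀ y ∈ A, Set.Icc x y ⊆ A) :
    SimplyConnectedSpace A := by
  have hpcs : PathConnectedSpace A := isPathConnected_iff_pathConnectedSpace.mp hpc
  rw [simply_connected_iff_paths_homotopic']
  refine ⟨hpcs, ?_⟩
  -- first: every loop is null-homotopic, by a median contraction
  have key : ∀ (z : A) (γ : Path z z), γ.Homotopic (Path.refl z) := by
    intro z γ
    set a : Fin 2 → ℝ := (z : Fin 2 → ℝ) with ha_def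
    have ha : a ∈ A := z.2
    -- the reparametrization (t, s) ↦ max s t in I
    have sgmem : ∀ st : I × I, max (st.2 : ℝ) (st.1 : ℝ) ∈ I := by
      intro st
      exact ⟨le_trans st.2.2.1 (le_max_left _ _), max_le st.2.2.2 st.1.2.2⟩
    set sg : I × I → I := fun st => ⟨max (st.2 : ℝ) (st.1 : ℝ), sgmem st⟩ with hsg
    have sgcont : Continuous sg := by
      apply Continuous.subtype_mk
      exact Continuous.max (continuous_subtype_val.comp continuous_snd)
        (continuous_subtype_val.comp continuous_fst)
    have Fmem : ∀ st : I × I,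
        medF a ((γ st.2 : Fin 2 → ℝ)) ((γ (sg st) : Fin 2 → ℝ)) ∈ A :=
      fun st => medF_mem hA ha (γ st.2).2 (γ (sg st)).2
    have c1 : Continuous fun st : I × I => (γ st.2 : Fin 2 → ℝ) :=
      continuous_subtype_val.comp (γ.continuous.comp continuous_snd)
    have c2 : Continuous fun st : I × I => (γ (sg st) : Fin 2 → ℝ) :=
      continuous_subtype_val.comp (γ.continuous.comp sgcont)
    have Fcont : Continuous fun st : I × I =>
        (⟨medF a ((γ st.2 : Fin 2 → ℝ)) ((γ (sg st) : Fin 2 → ℝ)), Fmem st⟩ : A) := by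
      apply Continuous.subtype_mk
      apply continuous_pi
      intro i
      unfold medF med3
      exact Continuous.max (Continuous.min continuous_const ((continuous_apply i).comp c1))
        (Continuous.min (Continuous.max continuous_const ((continuous_apply i).comp c1))
          ((continuous_apply i).comp c2))
    refine ⟨{ toFun := fun st =>
                ⟨medF a ((γ st.2 : Fin 2 → ℝ)) ((γ (sg st) : Fin 2 → ℝ)), Fmem st⟩
              continuous_toFun := Fcont
              map_zero_left := ?_
              map_one_left := ?_
              prop' := ?_ }⟩
    · intro s
      have hsg0 : sg (0, s) = s := by
        apply Subtype.ext
        simp [hsg, max_eq_left s.2.1]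
      simp only [hsg0]
      apply Subtype.ext
      funext i
      exact med3_abb _ _
    · intro s
      have hsg1 : sg (1, s) = 1 := by
        apply Subtype.ext
        simp [hsg, max_eq_right s.2.2]
      simp only [hsg1, γ.target]
      apply Subtype.ext
      funext i
      exact med3_aba _ _
    · intro t s hs
      simp only [Set.mem_insert_iff, Set.mem_singleton_iff] at hs
      rcases hs with rfl | rfl
      · apply Subtype.ext
        funext i
        show med3 (a i) ((γ 0 : Fin 2 → ℝ) i) ((γ (sg (t, 0)) : Fin 2 → ℝ) i)
            = ((γ 0 : Fin 2 → ℝ)) i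
        rw [γ.source, ← ha_def]
        exact med3_aac _ _
      · have hsg1 : sg (t, 1) = 1 := by
          apply Subtype.ext
          simp [hsg, max_eq_left t.2.2]
        apply Subtype.ext
        funext i
        show med3 (a i) ((γ 1 : Fin 2 → ℝ) i) ((γ (sg (t, 1)) : Fin 2 → ℝ) i)
            = ((γ 1 : Fin 2 → ℝ)) i
        rw [hsg1, γ.target, ← ha_def]
        exact med3_aac _ _
  -- now deduce that any two paths with the same endpoints are homotopic
  intro x y p q
  have h1 : (p.trans q.symm).Homotopic (Path.refl x) := key x (p.trans q.symm)
  have s1 : p.Homotopic (p.trans (Path.refl y)) :=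
    Path.Homotopic.symm ⟨Path.Homotopy.transRefl p⟩
  have s2 : (p.trans (Path.refl y)).Homotopic (p.trans (q.symm.trans q)) :=
    Path.Homotopic.hcomp (Path.Homotopic.refl p) ⟨Path.Homotopy.reflSymmTrans q⟩
  have s3 : (p.trans (q.symm.trans q)).Homotopic ((p.trans q.symm).trans q) :=
    Path.Homotopic.symm ⟨Path.Homotopy.transAssoc p q.symm q⟩
  have s4 : ((p.trans q.symm).trans q).Homotopic ((Path.refl x).trans q) :=
    Path.Homotopic.hcomp h1 (Path.Homotopic.refl q)
  have s5 : ((Path.refl x).trans q).Homotopic q := ⟨Path.Homotopy.reflTrans q⟩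
  exact ((((s1.trans s2).trans s3).trans s4).trans s5)
end

section
/- (Comparison principle) Let f, g : ℝⁿ → ℝⁿ be continuously differentiable vector fields and suppose the ODEs ẋ = f(x) and ẋ = g(x) have unique, globally defined solutions, giving flow maps φ_f, φ_g : [0,∞) × ℝⁿ → ℝⁿ with φ_f(0,x) = x, ∂_t φ_f(t,x) = f(φ_f(t,x)) and likewise for g. Assume f(x) ⪯ g(x) for all x ∈ ℝⁿ, and assume at least one of the two flows is monotone (x ⪯ y implies φ(t,x) ⪯ φ(t,y) for all t ≥ 0). Then for all initial conditions x₁ ⪯ x₂ and all t ≥ 0, one has φ_f(t,x₁) ⪯ φ_g(t,x₂). -/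
/-!
A monotone flow forces its vector field `h` to be quasimonotone (Kamke's condition): if
`x ≤ y` and `x i = y i`, then `φ t y i - φ t x i ≥ 0` vanishes at `t = 0`, so its derivative
`h y i - h x i` there is nonnegative. For a quasimonotone field a subsolution starting below a
strict supersolution stays below it: at a time when the order holds and coordinate `i` touches,
the `i`-th gap has positive derivative, so the order persists a little longer. A supersolution
`b` is made strict by adding `ε e^{L t}` to every coordinate, `L` exceeding a Lipschitz constant
of `h` near `b([0, T])`; then let `ε → 0`. For the field of the monotone flow, one of
`φ_f(·, x₁)`, `φ_g(·, x₂)` is a solution and the other a sub- or supersolution.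
-/

open Filter Topology Set Metric NNReal

def IsQuasimonotone {ι : Type*} (h : (ι → ℝ) → ι → ℝ) : Prop :=
  ∀ ⦃x y : ι → ℝ⦄, x ≤ y → ∀ i, x i = y i → h x i ≤ h y i

lemma HasDerivAt.eventually_nhdsGT_lt {u : ℝ → ℝ} {u' x : ℝ} (hu : HasDerivAt u u' x)
    (hu' : 0 < u') : ∀ᶠ t in 𝓝[>] x, u x < u t := by
  have hslope : Tendsto (slope u x) (𝓝[>] x) (𝓝 u') :=
    (hasDerivAt_iff_tendsto_slope.1 hu).mono_left (nhdsGT_le_nhdsNE x)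
  filter_upwards [hslope.eventually (lt_mem_nhds hu'), self_mem_nhdsWithin] with t hpos ht
  rw [slope_def_field, div_pos_iff_of_pos_right (sub_pos.2 ht)] at hpos
  linarith

lemma HasDerivAt.nonneg_of_eventually_nhdsGT_le {u : ℝ → ℝ} {u' x : ℝ} (hu : HasDerivAt u u' x)
    (hmin : ∀ᶠ t in 𝓝[>] x, u x ≤ u t) : 0 ≤ u' := by
  by_contra! hneg
  obtain ⟨t, hle, hlt⟩ := (hmin.and (hu.neg.eventually_nhdsGT_lt (neg_pos.2 hneg))).exists
  exact (neg_lt_neg_iff.1 hlt).not_ge hle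

theorem IsQuasimonotone.of_monotone_flow {ι : Type*} {h : (ι → ℝ) → ι → ℝ}
    {φ : ℝ → (ι → ℝ) → ι → ℝ} (hφ0 : ∀ x, φ 0 x = x) (hφ : ∀ x, HasDerivAt (fun t => φ t x) (h x) 0)
    (hmono : ∀ t ≥ (0 : ℝ), ∀ x y, x ≤ y → φ t x ≤ φ t y) : IsQuasimonotone h := by
  intro x y hxy i hi
  have hgap : HasDerivAt (fun t => φ t y i - φ t x i) (h y i - h x i) 0 :=
    (hasDerivAt_pi.1 (hφ y) i).sub (hasDerivAt_pi.1 (hφ x) i)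
  have hmin : ∀ᶠ t in 𝓝[>] (0 : ℝ), φ 0 y i - φ 0 x i ≤ φ t y i - φ t x i := by
    filter_upwards [self_mem_nhdsWithin] with t ht
    rw [hφ0, hφ0, hi, sub_self, sub_nonneg]
    exact hmono t (le_of_lt ht) x y hxy i
  exact sub_nonneg.1 (hgap.nonneg_of_eventually_nhdsGT_le hmin)

section

variable {ι : Type*} [Fintype ι] {h : (ι → ℝ) → ι → ℝ}

theorem IsQuasimonotone.le_of_strictSupersolution (hh : IsQuasimonotone h)
    {a b va vb : ℝ → ι → ℝ} {T : ℝ}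
    (ha : ∀ t ∈ Icc 0 T, HasDerivAt a (va t) t) (hva : ∀ t ∈ Icc 0 T, va t ≤ h (a t))
    (hb : ∀ t ∈ Icc 0 T, HasDerivAt b (vb t) t) (hvb : ∀ t ∈ Icc 0 T, ∀ i, h (b t) i < vb t i)
    (h0 : a 0 ≤ b 0) : ∀ t ∈ Icc 0 T, a t ≤ b t := by
  have hca : ContinuousOn a (Icc 0 T) := fun t ht => (ha t ht).continuousAt.continuousWithinAt
  have hcb : ContinuousOn b (Icc 0 T) := fun t ht => (hb t ht).continuousAt.continuousWithinAt
  have hclosed : IsClosed ({t | a t ≤ b t} ∩ Icc 0 T) := by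
    rw [inter_comm]
    exact isClosed_Icc.isClosed_le hca hcb
  refine hclosed.Icc_subset_of_forall_mem_nhdsWithin h0 fun x ⟨hx, hxT⟩ => ?_
  have hxIcc : x ∈ Icc 0 T := Ico_subset_Icc_self hxT
  show ∀ᶠ t in 𝓝[>] x, ∀ i, a t i ≤ b t i
  refine eventually_all.2 fun i => ?_
  have hgap : HasDerivAt (fun t => b t i - a t i) (vb x i - va x i) x :=
    (hasDerivAt_pi.1 (hb x hxIcc) i).sub (hasDerivAt_pi.1 (ha x hxIcc) i)
  rcases (hx i).lt_or_eq with hlt | heq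
  · have := hgap.continuousAt.eventually (lt_mem_nhds (sub_pos.2 hlt))
    filter_upwards [nhdsWithin_le_nhds this] with t ht
    exact (sub_pos.1 ht).le
  · have hpos : 0 < vb x i - va x i := by
      linarith [hva x hxIcc i, hh hx i heq, hvb x hxIcc i]
    filter_upwards [hgap.eventually_nhdsGT_lt hpos] with t ht
    linarith

lemma dist_add_const_self_le (x : ι → ℝ) {c : ℝ} (hc : 0 ≤ c) : dist (x + fun _ => c) x ≤ c := by
  rw [dist_eq_norm, add_sub_cancel_left]
  exact (pi_norm_le_iff_of_nonneg hc).2 fun _ => (Real.norm_of_nonneg hc).le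

lemma LipschitzOnWith.apply_add_const_le {C : ℝ≥0} {K : Set (ι → ℝ)}
    (hC : LipschitzOnWith C h K) {x : ι → ℝ} {c : ℝ} (hc : 0 ≤ c) (hx : x ∈ K)
    (hxc : x + (fun _ => c) ∈ K) (i : ι) : h (x + fun _ => c) i ≤ h x i + C * c := by
  calc h (x + fun _ => c) i ≤ h x i + dist (h (x + fun _ => c) i) (h x i) := by
        rw [Real.dist_eq]; linarith [le_abs_self (h (x + fun _ => c) i - h x i)]
    _ ≤ h x i + dist (h (x + fun _ => c)) (h x) := by gcongr; exact dist_le_pi_dist _ _ i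
    _ ≤ h x i + C * dist (x + fun _ => c) x := by gcongr; exact hC.dist_le_mul _ hxc _ hx
    _ ≤ h x i + C * c := by gcongr; exact dist_add_const_self_le x hc

theorem IsQuasimonotone.le_add_exp_of_supersolution (hh : IsQuasimonotone h)
    {a b va vb : ℝ → ι → ℝ} {T : ℝ} (hT : 0 ≤ T) {C : ℝ≥0}
    (hC : LipschitzOnWith C h (cthickening 1 (b '' Icc 0 T)))
    (ha : ∀ t ≥ (0 : ℝ), HasDerivAt a (va t) t) (hva : ∀ t ≥ (0 : ℝ), va t ≤ h (a t))
    (hb : ∀ t ≥ (0 : ℝ), HasDerivAt b (vb t) t) (hvb : ∀ t ≥ (0 : ℝ), h (b t) ≤ vb t)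
    (h0 : a 0 ≤ b 0) {ε : ℝ} (hε : 0 < ε) (hεT : ε < Real.exp (-((C + 1) * T))) :
    a T ≤ b T + fun _ => ε * Real.exp ((C + 1) * T) := by
  set L : ℝ := C + 1
  set e : ℝ → ℝ := fun t => ε * Real.exp (L * t)
  have he : ∀ t, HasDerivAt e (L * e t) t := fun t => by
    simpa [e, mul_comm, mul_left_comm] using ((hasDerivAt_id t).const_mul L).exp.const_mul ε
  have he_pos : ∀ t, 0 < e t := fun t => by positivity
  have he_le : ∀ t ∈ Icc 0 T, e t ≤ 1 := fun t ht => by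
    have hL : 0 ≤ L := by positivity
    calc e t ≤ ε * Real.exp (L * T) := by simp only [e]; gcongr; exact ht.2
      _ ≤ Real.exp (-(L * T)) * Real.exp (L * T) := by gcongr
      _ = 1 := by rw [← Real.exp_add, neg_add_cancel, Real.exp_zero]
  refine hh.le_of_strictSupersolution (b := fun t => b t + fun _ => e t)
    (vb := fun t => vb t + fun _ => L * e t) (fun t ht => ha t ht.1) (fun t ht => hva t ht.1)
    (fun t ht => (hb t ht.1).add (hasDerivAt_pi.2 fun _ => he t)) ?_ ?_ T ⟨hT, le_rfl⟩
  · intro t ht i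
    have hbK : b t ∈ cthickening 1 (b '' Icc 0 T) := self_subset_cthickening _ ⟨t, ht, rfl⟩
    have hbeK : (b t + fun _ => e t) ∈ cthickening 1 (b '' Icc 0 T) :=
      mem_cthickening_of_dist_le _ (b t) _ _ ⟨t, ht, rfl⟩
        ((dist_add_const_self_le (b t) (he_pos t).le).trans (he_le t ht))
    calc h (b t + fun _ => e t) i ≤ h (b t) i + C * e t :=
          hC.apply_add_const_le (he_pos t).le hbK hbeK i
      _ ≤ vb t i + C * e t := by gcongr; exact hvb t ht.1 i
      _ < vb t i + L * e t := by gcongr; exact lt_add_one _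
  · intro i
    show a 0 i ≤ b 0 i + e 0
    linarith [h0 i, he_pos 0]

theorem IsQuasimonotone.le_of_supersolution (hh : IsQuasimonotone h) (hlip : LocallyLipschitz h)
    {a b va vb : ℝ → ι → ℝ}
    (ha : ∀ t ≥ (0 : ℝ), HasDerivAt a (va t) t) (hva : ∀ t ≥ (0 : ℝ), va t ≤ h (a t))
    (hb : ∀ t ≥ (0 : ℝ), HasDerivAt b (vb t) t) (hvb : ∀ t ≥ (0 : ℝ), h (b t) ≤ vb t)
    (h0 : a 0 ≤ b 0) : ∀ t ≥ (0 : ℝ), a t ≤ b t := by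
  intro T hT
  have hcb : ContinuousOn b (Icc 0 T) := fun t ht => (hb t ht.1).continuousAt.continuousWithinAt
  have hK : IsCompact (cthickening 1 (b '' Icc 0 T)) :=
    (isCompact_Icc.image_of_continuousOn hcb).cthickening
  obtain ⟨C, hC⟩ := hlip.locallyLipschitzOn.exists_lipschitzOnWith_of_compact hK
  set E := Real.exp ((C + 1) * T)
  have hlim : Tendsto (fun ε : ℝ => b T + fun _ => ε * E) (𝓝[>] 0) (𝓝 (b T)) := by
    have : Continuous fun ε : ℝ => b T + fun _ : ι => ε * E := by fun_prop
    simpa [← Pi.zero_def] using tendsto_nhdsWithin_of_tendsto_nhds (this.tendsto 0)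
  refine ge_of_tendsto hlim (eventually_of_mem (Ioo_mem_nhdsGT (Real.exp_pos (-((C + 1) * T)))) ?_)
  rintro ε ⟨hε, hεT⟩
  exact hh.le_add_exp_of_supersolution hT hC ha hva hb hvb h0 hε hεT

end

theorem comparison_principle_general {n : ℕ}
    (f g : (Fin n → ℝ) → (Fin n → ℝ))
    (hf : ContDiff ℝ 1 f) (hg : ContDiff ℝ 1 g)
    (φf φg : ℝ → (Fin n → ℝ) → (Fin n → ℝ))
    (hφf0 : ∀ x, φf 0 x = x)
    (hφf : ∀ x, ∀ t ≥ (0 : ℝ), HasDerivAt (fun s => φf s x) (f (φf t x)) t)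
    (hφg0 : ∀ x, φg 0 x = x)
    (hφg : ∀ x, ∀ t ≥ (0 : ℝ), HasDerivAt (fun s => φg s x) (g (φg t x)) t)
    (hfg : ∀ x, f x ≤ g x)
    (hmono : (∀ t ≥ (0 : ℝ), ∀ x y : Fin n → ℝ, x ≤ y → φf t x ≤ φf t y) ∨
             (∀ t ≥ (0 : ℝ), ∀ x y : Fin n → ℝ, x ≤ y → φg t x ≤ φg t y))
    (x₁ x₂ : Fin n → ℝ) (hx : x₁ ≤ x₂) :
    ∀ t ≥ (0 : ℝ), φf t x₁ ≤ φg t x₂ := by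
  have h0 : φf 0 x₁ ≤ φg 0 x₂ := by rwa [hφf0, hφg0]
  rcases hmono with hmono | hmono
  · have hK : IsQuasimonotone f := .of_monotone_flow hφf0
      (fun x => by simpa only [hφf0] using hφf x 0 le_rfl) hmono
    exact hK.le_of_supersolution hf.locallyLipschitz (hφf x₁) (fun _ _ => le_rfl) (hφg x₂)
      (fun _ _ => hfg _) h0
  · have hK : IsQuasimonotone g := .of_monotone_flow hφg0
      (fun x => by simpa only [hφg0] using hφg x 0 le_rfl) hmono
    exact hK.le_of_supersolution hg.locallyLipschitz (hφf x₁) (fun _ _ => hfg _) (hφg x₂)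
      (fun _ _ => le_rfl) h0

/-- Comparison principle: Let `f, g : ℝⁿ → ℝⁿ` be `C¹` vector fields whose
ODEs have unique globally defined solutions, with flow maps `φf`, `φg` (i.e. `φ 0 x = x` and
`∂ₜ φ t x = f (φ t x)` for `t ≥ 0`, and any solution of the ODE coincides with the flow).
If `f x ⪯ g x` for all `x` and at least one of the two flows is monotone, then
`φf t x₁ ⪯ φg t x₂` for all `t ≥ 0` whenever `x₁ ⪯ x₂`. -/
theorem comparison_principle {n : ℕ}
    (f g : (Fin n → ℝ) → (Fin n → ℝ))
    (hf : ContDiff ℝ 1 f) (hg : ContDiff ℝ 1 g)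
    (φf φg : ℝ → (Fin n → ℝ) → (Fin n → ℝ))
    (hφf0 : ∀ x, φf 0 x = x)
    (hφf : ∀ x, ∀ t ≥ (0 : ℝ), HasDerivAt (fun s => φf s x) (f (φf t x)) t)
    (hφfuniq : ∀ (x : Fin n → ℝ) (ψ : ℝ → (Fin n → ℝ)), ψ 0 = x →
      (∀ t ≥ (0 : ℝ), HasDerivAt ψ (f (ψ t)) t) → ∀ t ≥ (0 : ℝ), ψ t = φf t x)
    (hφg0 : ∀ x, φg 0 x = x)
    (hφg : ∀ x, ∀ t ≥ (0 : ℝ), HasDerivAt (fun s => φg s x) (g (φg t x)) t)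
    (hφguniq : ∀ (x : Fin n → ℝ) (ψ : ℝ → (Fin n → ℝ)), ψ 0 = x →
      (∀ t ≥ (0 : ℝ), HasDerivAt ψ (g (ψ t)) t) → ∀ t ≥ (0 : ℝ), ψ t = φg t x)
    (hfg : ∀ x, f x ≤ g x)
    (hmono : (∀ t ≥ (0 : ℝ), ∀ x y : Fin n → ℝ, x ≤ y → φf t x ≤ φf t y) ∨
             (∀ t ≥ (0 : ℝ), ∀ x y : Fin n → ℝ, x ≤ y → φg t x ≤ φg t y))
    (x₁ x₂ : Fin n → ℝ) (hx : x₁ ≤ x₂) :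
    ∀ t ≥ (0 : ℝ), φf t x₁ ≤ φg t x₂ :=
  comparison_principle_general f g hf hg φf φg hφf0 hφf hφg0 hφg hfg hmono x₁ x₂ hx
end

section
/- (Perron–Frobenius property of linear monotone systems) Let A be a real n × n matrix (n ≥ 1) such that the matrix exponential exp(tA) has all entries nonnegative for every t ≥ 0 (i.e., the linear system ẋ = Ax is monotone). Then there exist a real number λ and a vector v ∈ ℝⁿ with v ≥ 0 componentwise and v ≠ 0 such that A v = λ v, and every complex eigenvalue μ of A satisfies Re(μ) ≤ λ. In particular, the eigenvalue of A with maximal real part is real and admits a nonnegative eigenvector. -/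
/-!
Nonnegativity of `exp (t • A) = 1 + t • A + O(t²)` for small `t > 0` forces the off-diagonal
entries of `A` to be nonnegative, so `B = A + c • 1` is entrywise nonnegative for large `c`, and
`Re μ + c ≤ ‖μ + c‖` reduces the claim to the Perron–Frobenius theorem for `B`: its spectral
radius `ρ` is an eigenvalue with a nonnegative eigenvector.

For that, take an eigenvalue `μ₀` with `‖μ₀‖ = ρ` and eigenvector `w`; by the triangle inequality
`x = |w|` satisfies `ρ • x ≤ B x`. For `t > ρ`, Gelfand's formula makes the Neumann series
`∑ Bᵏ / tᵏ⁺¹` converge, so `(t - B)⁻¹` is entrywise nonnegative and commutes with `B`; hence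
`y = (t - B)⁻¹ x ≥ 0` satisfies `ρ • y ≤ B y` and `‖B y - ρ • y‖ ≤ (t - ρ) ‖y‖`. Letting `t ↓ ρ`,
a minimiser of `‖ρ • v - B v‖` over the compact set of nonnegative unit vectors is the eigenvector.
-/

open Filter NormedSpace Set
open scoped ENNReal

theorem Pi.norm_le_norm_of_nonneg_of_le {ι : Type*} [Fintype ι] {u v : ι → ℝ} (hu : 0 ≤ u)
    (huv : u ≤ v) : ‖u‖ ≤ ‖v‖ :=
  (pi_norm_le_iff_of_nonneg (norm_nonneg _)).mpr fun i =>
    (Real.norm_of_nonneg (hu i)).trans_le ((huv i).trans ((Real.le_norm_self _).trans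
      (norm_le_pi_norm v i)))

namespace Matrix

variable {ι : Type*} [Fintype ι]

theorem mulVec_mono_of_nonneg {R : Matrix ι ι ℝ} (hR : ∀ i j, 0 ≤ R i j) {u v : ι → ℝ}
    (huv : u ≤ v) : R *ᵥ u ≤ R *ᵥ v := fun i =>
  Finset.sum_le_sum fun j _ => mul_le_mul_of_nonneg_left (huv j) (hR i j)

theorem norm_smul_norm_le_mulVec_norm {B : Matrix ι ι ℝ} (hB : ∀ i j, 0 ≤ B i j) {μ : ℂ}
    {w : ι → ℂ} (hw : B.map Complex.ofReal *ᵥ w = μ • w) :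
    ‖μ‖ • (fun i => ‖w i‖) ≤ B *ᵥ fun i => ‖w i‖ := fun i =>
  calc ‖μ‖ * ‖w i‖ = ‖∑ j, (B i j : ℂ) * w j‖ := by
        rw [← norm_mul, ← smul_eq_mul, ← Pi.smul_apply, ← hw]; rfl
    _ ≤ ∑ j, ‖(B i j : ℂ) * w j‖ := norm_sum_le _ _
    _ = (B *ᵥ fun i => ‖w i‖) i := by
        simp [mulVec, dotProduct, Complex.norm_real, abs_of_nonneg (hB i _)]

theorem exists_nonneg_mulVec_eq_smul_of_forall_approx (B : Matrix ι ι ℝ) (ρ : ℝ)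
    (h : ∀ ε > 0, ∃ y, 0 ≤ y ∧ y ≠ 0 ∧ ‖ρ • y - B *ᵥ y‖ ≤ ε * ‖y‖) :
    ∃ v, 0 ≤ v ∧ v ≠ 0 ∧ B *ᵥ v = ρ • v := by
  have hnormalize : ∀ ε > 0, ∃ v ∈ Ici 0 ∩ Metric.sphere 0 1, ‖ρ • v - B *ᵥ v‖ ≤ ε := by
    intro ε hε
    obtain ⟨y, hy0, hy, hyε⟩ := h ε hε
    have hny : 0 < ‖y‖ := norm_pos_iff.mpr hy
    refine ⟨‖y‖⁻¹ • y, ⟨smul_nonneg (by positivity) hy0, ?_⟩, ?_⟩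
    · simp [norm_smul, hny.ne']
    · rw [mulVec_smul, smul_comm, ← smul_sub, norm_smul, norm_inv, norm_norm,
        inv_mul_le_iff₀ hny, mul_comm]
      exact hyε
  have hK : IsCompact (Ici (0 : ι → ℝ) ∩ Metric.sphere 0 1) :=
    (isCompact_sphere 0 1).inter_left isClosed_Ici
  obtain ⟨v, hvK, hvmin⟩ := hK.exists_isMinOn
    ((hnormalize 1 one_pos).imp fun _ => And.left)
    (by fun_prop : Continuous fun v : ι → ℝ => ‖ρ • v - B *ᵥ v‖).continuousOn
  have hv0 : ‖ρ • v - B *ᵥ v‖ ≤ 0 := le_of_forall_gt_imp_ge_of_dense fun ε hε =>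
    let ⟨u, huK, hu⟩ := hnormalize ε hε
    (hvmin huK).trans hu
  refine ⟨v, hvK.1, ?_, (sub_eq_zero.mp (norm_le_zero_iff.mp hv0)).symm⟩
  rintro rfl
  simp at hvK

variable [DecidableEq ι]

theorem mem_spectrum_iff_exists_mulVec_eq_smul {K : Type*} [Field K] (M : Matrix ι ι K) (μ : K) :
    μ ∈ spectrum K M ↔ ∃ w ≠ 0, M *ᵥ w = μ • w := by
  rw [← spectrum_toLin', ← Module.End.hasEigenvalue_iff_mem_spectrum,
    Module.End.hasEigenvalue_iff, Submodule.ne_bot_iff]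
  simp [and_comm]

theorem eventually_abs_pow_apply_le (B : Matrix ι ι ℝ) {s : ℝ}
    (hs : spectralRadius ℂ (B.map Complex.ofReal) < ENNReal.ofReal s) :
    ∀ᶠ k in atTop, ∀ i j, |(B ^ k) i j| ≤ s ^ k := by
  have hs0 : 0 < s := ENNReal.ofReal_pos.mp (pos_of_gt hs)
  have hC : ∀ᶠ k in atTop, ∀ i j, ‖(B.map Complex.ofReal ^ k) i j‖ ≤ s ^ k := by
    -- any Banach algebra norm works in Gelfand's formula; the `ℓ∞` operator norm bounds entries
    let := Matrix.linftyOpNormedRing (n := ι) (α := ℂ)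
    let := Matrix.linftyOpNormedAlgebra (n := ι) (R := ℂ) (α := ℂ)
    have hgelfand := spectrum.pow_norm_pow_one_div_tendsto_nhds_spectralRadius
      (B.map Complex.ofReal)
    filter_upwards [hgelfand.eventually_lt_const hs, eventually_ne_atTop 0] with k hk hk0 i j
    rw [ENNReal.ofReal_lt_ofReal_iff hs0] at hk
    have hnorm : ‖B.map Complex.ofReal ^ k‖ ≤ s ^ k := by
      have := pow_le_pow_left₀ (by positivity) hk.le k
      rwa [← Real.rpow_natCast, ← Real.rpow_mul (norm_nonneg _),
        one_div_mul_cancel (by exact_mod_cast hk0), Real.rpow_one] at this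
    set M := B.map Complex.ofReal ^ k
    have hentry : ‖M i j‖₊ ≤ ‖M‖₊ := by
      rw [linfty_opNNNorm_def]
      exact (Finset.single_le_sum (fun _ _ => zero_le) (Finset.mem_univ j)).trans
        (Finset.le_sup (f := fun i => ∑ j, ‖M i j‖₊) (Finset.mem_univ i))
    exact (NNReal.coe_le_coe.mpr hentry).trans hnorm
  filter_upwards [hC] with k hk i j
  have hmap : B.map Complex.ofReal ^ k = (B ^ k).map Complex.ofReal :=
    (Matrix.map_pow B Complex.ofRealHom k).symm
  simpa [hmap] using hk i j

theorem summable_pow_inv_smul (B : Matrix ι ι ℝ) {t : ℝ}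
    (ht : spectralRadius ℂ (B.map Complex.ofReal) < ENNReal.ofReal t) :
    Summable fun k : ℕ => (t⁻¹ • B) ^ k := by
  obtain ⟨s, hs0, hs, hst⟩ := ENNReal.lt_iff_exists_real_btwn.mp ht
  obtain ⟨hst, ht0⟩ := (ENNReal.ofReal_lt_ofReal_iff'.mp hst)
  refine Pi.summable.mpr fun i => Pi.summable.mpr fun j => ?_
  refine Summable.of_norm_bounded_eventually_nat
    (summable_geometric_of_lt_one (by positivity) ((div_lt_one ht0).mpr hst)) ?_
  filter_upwards [eventually_abs_pow_apply_le B hs] with k hk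
  rw [smul_pow, smul_apply, smul_eq_mul, norm_mul, norm_pow, norm_inv, Real.norm_eq_abs,
    Real.norm_eq_abs, abs_of_pos ht0, div_pow, div_eq_inv_mul, ← inv_pow]
  exact mul_le_mul_of_nonneg_left (hk i j) (by positivity)

theorem exists_nonneg_inverse_smul_one_sub {B : Matrix ι ι ℝ} (hB : ∀ i j, 0 ≤ B i j) {t : ℝ}
    (ht : spectralRadius ℂ (B.map Complex.ofReal) < ENNReal.ofReal t) :
    ∃ R : Matrix ι ι ℝ, (∀ i j, 0 ≤ R i j) ∧ (t • 1 - B) * R = 1 ∧ R * (t • 1 - B) = 1 := by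
  have ht0 : 0 < t := ENNReal.ofReal_pos.mp (pos_of_gt ht)
  have hsum := summable_pow_inv_smul B ht
  have hfactor : t • 1 - B = t • (1 - t⁻¹ • B) := by
    rw [smul_sub, smul_smul, mul_inv_cancel₀ ht0.ne', one_smul]
  have hS : ∀ i j, 0 ≤ (∑' k, (t⁻¹ • B) ^ k) i j := fun i j =>
    (Pi.hasSum.mp (Pi.hasSum.mp hsum.hasSum i) j).nonneg fun k =>
      pow_apply_nonneg (fun i j => mul_nonneg (inv_nonneg.mpr ht0.le) (hB i j)) k i j
  refine ⟨t⁻¹ • ∑' k, (t⁻¹ • B) ^ k, fun i j => mul_nonneg (inv_nonneg.mpr ht0.le) (hS i j),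
    ?_, ?_⟩
  · rw [hfactor, smul_mul_smul_comm, mul_inv_cancel₀ ht0.ne', one_smul,
      hsum.one_sub_mul_tsum_pow]
  · rw [hfactor, smul_mul_smul_comm, inv_mul_cancel₀ ht0.ne', one_smul,
      hsum.tsum_pow_mul_one_sub]

theorem exists_approx_nonneg_eigenvector {B : Matrix ι ι ℝ} (hB : ∀ i j, 0 ≤ B i j) {ρ : ℝ}
    (hρ0 : 0 ≤ ρ) (hρ : spectralRadius ℂ (B.map Complex.ofReal) ≤ ENNReal.ofReal ρ)
    {x : ι → ℝ} (hx0 : 0 ≤ x) (hx : x ≠ 0) (hρx : ρ • x ≤ B *ᵥ x) {ε : ℝ} (hε : 0 < ε) :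
    ∃ y, 0 ≤ y ∧ y ≠ 0 ∧ ‖ρ • y - B *ᵥ y‖ ≤ ε * ‖y‖ := by
  set t := ρ + ε
  have ht : spectralRadius ℂ (B.map Complex.ofReal) < ENNReal.ofReal t :=
    hρ.trans_lt ((ENNReal.ofReal_lt_ofReal_iff (by positivity)).mpr (by linarith))
  obtain ⟨R, hR0, hRleft, hRright⟩ := exists_nonneg_inverse_smul_one_sub hB ht
  have hcomm : B * R = R * B := by
    have h := hRleft.trans hRright.symm
    rwa [sub_mul, mul_sub, smul_mul_assoc, mul_smul_comm, one_mul, mul_one,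
      sub_right_inj] at h
  set y := R *ᵥ x
  have hy0 : 0 ≤ y := by simpa using mulVec_mono_of_nonneg hR0 hx0
  have hty : t • y - B *ᵥ y = x := by
    calc t • y - B *ᵥ y = (t • 1 - B) *ᵥ y := by rw [sub_mulVec, smul_mulVec, one_mulVec]
      _ = x := by rw [mulVec_mulVec, hRleft, one_mulVec]
  have hρy : ρ • y ≤ B *ᵥ y := by
    rw [mulVec_mulVec, hcomm, ← mulVec_mulVec, ← mulVec_smul]
    exact mulVec_mono_of_nonneg hR0 hρx
  have hy : y ≠ 0 := by
    intro h
    apply hx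
    rw [← hty, h]
    simp
  refine ⟨y, hy0, hy, ?_⟩
  have hgap : B *ᵥ y - ρ • y = ε • y - x := by
    rw [← hty]; simp only [t, add_smul]; abel
  rw [← norm_neg, neg_sub, hgap]
  calc ‖ε • y - x‖ ≤ ‖ε • y‖ :=
        Pi.norm_le_norm_of_nonneg_of_le (hgap ▸ sub_nonneg.mpr hρy) (sub_le_self _ hx0)
    _ = ε * ‖y‖ := by rw [norm_smul, Real.norm_of_nonneg hε.le]

theorem exists_nonneg_eigenvector_of_nonneg [Nonempty ι] {B : Matrix ι ι ℝ}
    (hB : ∀ i j, 0 ≤ B i j) :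
    ∃ (r : ℝ) (v : ι → ℝ), 0 ≤ v ∧ v ≠ 0 ∧ B *ᵥ v = r • v ∧
      ∀ (μ : ℂ) (w : ι → ℂ), w ≠ 0 → B.map Complex.ofReal *ᵥ w = μ • w → ‖μ‖ ≤ r := by
  let := Matrix.linftyOpNormedRing (n := ι) (α := ℂ)
  let := Matrix.linftyOpNormedAlgebra (n := ι) (R := ℂ) (α := ℂ)
  obtain ⟨μ₀, hμ₀, hμ₀ρ⟩ := spectrum.exists_nnnorm_eq_spectralRadius (B.map Complex.ofReal)
  obtain ⟨w, hw, hBw⟩ := (mem_spectrum_iff_exists_mulVec_eq_smul _ μ₀).mp hμ₀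
  have hρ : spectralRadius ℂ (B.map Complex.ofReal) = ENNReal.ofReal ‖μ₀‖ := by
    rw [← hμ₀ρ, ← coe_nnnorm, ENNReal.ofReal_coe_nnreal]
  have hx : (fun i => ‖w i‖) ≠ 0 := fun h =>
    hw (funext fun i => norm_eq_zero.mp (congr_fun h i))
  obtain ⟨v, hv0, hv, hBv⟩ := exists_nonneg_mulVec_eq_smul_of_forall_approx B ‖μ₀‖ fun ε hε =>
    exists_approx_nonneg_eigenvector hB (norm_nonneg _) hρ.le (fun i => norm_nonneg (w i)) hx
      (norm_smul_norm_le_mulVec_norm hB hBw) hε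
  refine ⟨‖μ₀‖, v, hv0, hv, hBv, fun μ u hu hBu => ?_⟩
  have hμ : (‖μ‖₊ : ℝ≥0∞) ≤ ‖μ₀‖₊ :=
    hμ₀ρ ▸ le_iSup₂ (f := fun z (_ : z ∈ spectrum ℂ _) => (‖z‖₊ : ℝ≥0∞)) μ
      ((mem_spectrum_iff_exists_mulVec_eq_smul _ μ).mpr ⟨u, hu, hBu⟩)
  exact_mod_cast hμ

theorem apply_nonneg_of_exp_smul_nonneg {A : Matrix ι ι ℝ}
    (hA : ∀ t ≥ (0 : ℝ), ∀ i j, 0 ≤ exp (t • A) i j) {i j : ι} (hij : i ≠ j) : 0 ≤ A i j := by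
  let := Matrix.linftyOpNormedRing (n := ι) (α := ℝ)
  let := Matrix.linftyOpNormedAlgebra (n := ι) (R := ℝ) (α := ℝ)
  have hderiv : HasDerivAt (fun t : ℝ => exp (t • A) i j) (A i j) 0 := by
    have := hasDerivAt_pi.mp (hasDerivAt_pi.mp (hasDerivAt_exp_smul_const (𝕂 := ℝ) A 0) i) j
    rwa [zero_smul, exp_zero, one_mul] at this
  have hmin : IsLocalMinOn (fun t : ℝ => exp (t • A) i j) (Ici 0) 0 :=
    eventually_mem_nhdsWithin.mono fun t ht => by
      simpa [one_apply_ne hij] using hA t ht i j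
  simpa using hmin.hasFDerivWithinAt_nonneg hderiv.hasDerivWithinAt
    (mem_posTangentConeAt_of_segment_subset (y := 1)
      (by simp [segment_eq_Icc, Icc_subset_Ici_self]))

theorem exists_apply_nonneg_add_smul_one {A : Matrix ι ι ℝ} (hA : ∀ i j, i ≠ j → 0 ≤ A i j) :
    ∃ c : ℝ, ∀ i j, 0 ≤ (A + c • 1) i j := by
  refine ⟨∑ i, |A i i|, fun i j => ?_⟩
  rcases eq_or_ne i j with rfl | hij
  · have := Finset.single_le_sum (fun k _ => abs_nonneg (A k k)) (Finset.mem_univ i)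
    simp only [add_apply, smul_apply, one_apply_eq, smul_eq_mul, mul_one]
    linarith [neg_abs_le (A i i)]
  · simpa [one_apply_ne hij] using hA i j hij

theorem exists_nonneg_eigenvector_of_offDiag_nonneg [Nonempty ι] {A : Matrix ι ι ℝ}
    (hA : ∀ i j, i ≠ j → 0 ≤ A i j) :
    ∃ (r : ℝ) (v : ι → ℝ), 0 ≤ v ∧ v ≠ 0 ∧ A *ᵥ v = r • v ∧
      ∀ (μ : ℂ) (w : ι → ℂ), w ≠ 0 → A.map Complex.ofReal *ᵥ w = μ • w → μ.re ≤ r := by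
  obtain ⟨c, hc⟩ := exists_apply_nonneg_add_smul_one hA
  obtain ⟨r, v, hv0, hv, hBv, hbound⟩ := exists_nonneg_eigenvector_of_nonneg hc
  refine ⟨r - c, v, hv0, hv, ?_, fun μ w hw hAw => ?_⟩
  · rw [add_mulVec, smul_mulVec, one_mulVec] at hBv
    rw [sub_smul, ← hBv, add_sub_cancel_right]
  · have hBw : (A + c • 1).map Complex.ofReal *ᵥ w = (μ + c) • w := by
      simp [Matrix.map_add, add_mulVec, hAw, add_smul, smul_one_eq_diagonal, diagonal_map]
    have hre : μ.re + c ≤ ‖μ + c‖ := by simpa using Complex.re_le_norm (μ + c)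
    linarith [hbound _ w hw hBw]

end Matrix

/-- Perron–Frobenius property of linear monotone systems: Let `A` be a real
`n × n` matrix (`n ≥ 1`) such that `exp (t • A)` is entrywise nonnegative for every `t ≥ 0`.
Then there exist `λ ∈ ℝ` and a vector `v ⪰ 0`, `v ≠ 0`, with `A v = λ v`, and every complex
eigenvalue `μ` of `A` satisfies `Re μ ≤ λ`. -/
theorem perron_frobenius_of_monotone_linear_system {n : ℕ} (hn : 0 < n)
    (A : Matrix (Fin n) (Fin n) ℝ)
    (hpos : ∀ t ≥ (0 : ℝ), ∀ i j, 0 ≤ NormedSpace.exp (t • A) i j) :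
    ∃ (lam : ℝ) (v : Fin n → ℝ), 0 ≤ v ∧ v ≠ 0 ∧ A.mulVec v = lam • v ∧
      ∀ (μ : ℂ) (w : Fin n → ℂ), w ≠ 0 →
        (A.map (fun a : ℝ => (a : ℂ))).mulVec w = μ • w → μ.re ≤ lam := by
  have : Nonempty (Fin n) := ⟨⟨0, hn⟩⟩
  exact Matrix.exists_nonneg_eigenvector_of_offDiag_nonneg fun i j hij =>
    Matrix.apply_nonneg_of_exp_smul_nonneg hpos hij
end

section
/- Let f : ℝⁿ → ℝⁿ be a continuously differentiable vector field whose ODE ẋ = f(x) has a unique global flow φ, and assume φ is monotone. Let x* be a fixed point with basin of attraction B = B(x*). Let λ₁ < 0 and let s₁ : B → ℝ be a C¹ function that is increasing on B (x ⪯ y implies s₁(x) ≤ s₁(y)) and satisfies the eigenfunction equation ⟨∇s₁(x), f(x)⟩ = λ₁ s₁(x) for all x ∈ B. Assume that x* is the only point of B ∩ (x* + ℝ₊ⁿ) where s₁ vanishes, where x* + ℝ₊ⁿ = {x : x ⪰ x*}. Then: (1) the set X = (x* + ℝ₊ⁿ) ∩ B is forward invariant under φ; (2) s₁(x*) = 0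 and s₁(x) > 0 for every x ∈ X \ {x*}; (3) the derivative of s₁ along trajectories, which equals λ₁ s₁(x), is strictly negative for every x ∈ X \ {x*}. Hence s₁ is a Lyapunov function for the system on X. -/
open Filter Topology

/-! Monotonicity of the flow and the fixed point `x*` keep the cone `x* + ℝ₊ⁿ` forward invariant,
and uniqueness of solutions gives the semigroup law, which keeps the basin forward invariant.
Since `f x* = 0`, the eigenfunction equation at `x*` reads `0 = λ₁ s₁(x*)`, so `s₁(x*) = 0`;
monotonicity of `s₁` then makes `s₁ ≥ 0` on the cone, and `s₁` vanishes there only at `x*`. -/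

section Flow

variable {E : Type*} [NormedAddCommGroup E] [NormedSpace ℝ E] {f : E → E} {φ : ℝ → E → E}

theorem flow_add
    (hd : ∀ x, ∀ t ≥ (0 : ℝ), HasDerivAt (fun s => φ s x) (f (φ t x)) t)
    (huniq : ∀ (x : E) (ψ : ℝ → E), ψ 0 = x →
      (∀ t ≥ (0 : ℝ), HasDerivAt ψ (f (ψ t)) t) → ∀ t ≥ (0 : ℝ), ψ t = φ t x)
    {x : E} {s t : ℝ} (hs : 0 ≤ s) (ht : 0 ≤ t) : φ (s + t) x = φ s (φ t x) := by
  refine huniq (φ t x) (fun u => φ (u + t) x) (by simp) (fun u hu => ?_) s hs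
  have hshift : HasDerivAt (fun v => φ v x) (f (φ (u + t) x)) (id u + t) :=
    hd x (u + t) (by linarith)
  simpa [Function.comp_def] using hshift.scomp u ((hasDerivAt_id u).add_const t)

theorem tendsto_flow_flow
    (hd : ∀ x, ∀ t ≥ (0 : ℝ), HasDerivAt (fun s => φ s x) (f (φ t x)) t)
    (huniq : ∀ (x : E) (ψ : ℝ → E), ψ 0 = x →
      (∀ t ≥ (0 : ℝ), HasDerivAt ψ (f (ψ t)) t) → ∀ t ≥ (0 : ℝ), ψ t = φ t x)
    {x xs : E} (hx : Tendsto (fun s => φ s x) atTop (𝓝 xs)) {t : ℝ} (ht : 0 ≤ t) :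
    Tendsto (fun s => φ s (φ t x)) atTop (𝓝 xs) := by
  refine (hx.comp (tendsto_atTop_add_const_right _ t tendsto_id)).congr' ?_
  filter_upwards [eventually_ge_atTop 0] with s hs
  exact flow_add hd huniq hs ht

theorem vectorField_eq_zero_of_flow_fixed
    (hd : ∀ x, ∀ t ≥ (0 : ℝ), HasDerivAt (fun s => φ s x) (f (φ t x)) t)
    {xs : E} (hfix : ∀ t ≥ (0 : ℝ), φ t xs = xs) : f xs = 0 := by
  have hconst : (fun s => φ s xs) =ᶠ[𝓝 1] fun _ => xs := by
    filter_upwards [Ioi_mem_nhds one_pos] with s hs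
    exact hfix s hs.le
  have hderiv := ((hd xs 1 zero_le_one).congr_of_eventuallyEq hconst.symm).unique
    (hasDerivAt_const 1 xs)
  rwa [hfix 1 zero_le_one] at hderiv

end Flow

theorem eigenfunction_is_lyapunov_on_upper_cone_general {n : ℕ}
    (f : (Fin n → ℝ) → (Fin n → ℝ))
    (φ : ℝ → (Fin n → ℝ) → (Fin n → ℝ))
    (hd : ∀ x, ∀ t ≥ (0 : ℝ), HasDerivAt (fun s => φ s x) (f (φ t x)) t)
    (huniq : ∀ (x : Fin n → ℝ) (ψ : ℝ → (Fin n → ℝ)), ψ 0 = x →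
      (∀ t ≥ (0 : ℝ), HasDerivAt ψ (f (ψ t)) t) → ∀ t ≥ (0 : ℝ), ψ t = φ t x)
    (hmono : ∀ t ≥ (0 : ℝ), ∀ x y : Fin n → ℝ, x ≤ y → φ t x ≤ φ t y)
    (xs : Fin n → ℝ) (hfix : ∀ t ≥ (0 : ℝ), φ t xs = xs)
    (B : Set (Fin n → ℝ))
    (hB : B = {x | Tendsto (fun t => φ t x) atTop (𝓝 xs)})
    (l1 : ℝ) (hl1 : l1 < 0)
    (s1 : (Fin n → ℝ) → ℝ)
    (hinc : ∀ x ∈ B, ∀ y ∈ B, x ≤ y → s1 x ≤ s1 y)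
    (heig : ∀ x ∈ B, fderiv ℝ s1 x (f x) = l1 * s1 x)
    (hzero : ∀ x ∈ B, xs ≤ x → s1 x = 0 → x = xs) :
    (∀ x ∈ {y : Fin n → ℝ | xs ≤ y} ∩ B, ∀ t ≥ (0 : ℝ),
        φ t x ∈ {y : Fin n → ℝ | xs ≤ y} ∩ B) ∧
    (s1 xs = 0 ∧ ∀ x ∈ {y : Fin n → ℝ | xs ≤ y} ∩ B, x ≠ xs → 0 < s1 x) ∧
    (∀ x ∈ {y : Fin n → ℝ | xs ≤ y} ∩ B, x ≠ xs → l1 * s1 x < 0) := by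
  subst hB
  have hxsB : Tendsto (fun t => φ t xs) atTop (𝓝 xs) :=
    tendsto_const_nhds.congr' <| (eventually_ge_atTop 0).mono fun t ht => (hfix t ht).symm
  have hs1xs : s1 xs = 0 := by
    have heig_xs := heig xs hxsB
    rw [vectorField_eq_zero_of_flow_fixed hd hfix, map_zero] at heig_xs
    exact (mul_eq_zero.mp heig_xs.symm).resolve_left hl1.ne
  have hpos : ∀ x ∈ {y | xs ≤ y} ∩ {x | Tendsto (fun t => φ t x) atTop (𝓝 xs)}, x ≠ xs →
      0 < s1 x := by
    rintro x ⟨hx, hxB⟩ hne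
    exact (hs1xs ▸ hinc xs hxsB x hxB hx).lt_of_ne' fun h => hne (hzero x hxB hx h)
  refine ⟨?_, ⟨hs1xs, hpos⟩, fun x hx hne => mul_neg_of_neg_of_pos hl1 (hpos x hx hne)⟩
  rintro x ⟨hx, hxB⟩ t ht
  exact ⟨hfix t ht ▸ hmono t ht xs x hx, tendsto_flow_flow hd huniq hxB ht⟩

/-- Let `f` be a `C¹` vector field with unique global flow `φ`, assume `φ` is
monotone, let `x*` be a fixed point with basin of attraction `B`. Let `λ₁ < 0` and let
`s₁` be a `C¹` function on `B`, increasing on `B`, satisfying `⟨∇s₁ x, f x⟩ = λ₁ s₁ x` on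
`B`, and vanishing on `B ∩ (x* + ℝ₊ⁿ)` only at `x*`. Then `X = (x* + ℝ₊ⁿ) ∩ B` is forward
invariant, `s₁ x* = 0` and `s₁ > 0` on `X \ {x*}`, and the derivative `λ₁ s₁` of `s₁` along
trajectories is strictly negative on `X \ {x*}`; hence `s₁` is a Lyapunov function on `X`. -/
theorem eigenfunction_is_lyapunov_on_upper_cone {n : ℕ}
    (f : (Fin n → ℝ) → (Fin n → ℝ)) (hf : ContDiff ℝ 1 f)
    (φ : ℝ → (Fin n → ℝ) → (Fin n → ℝ))
    (h0 : ∀ x, φ 0 x = x)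
    (hd : ∀ x, ∀ t ≥ (0 : ℝ), HasDerivAt (fun s => φ s x) (f (φ t x)) t)
    (huniq : ∀ (x : Fin n → ℝ) (ψ : ℝ → (Fin n → ℝ)), ψ 0 = x →
      (∀ t ≥ (0 : ℝ), HasDerivAt ψ (f (ψ t)) t) → ∀ t ≥ (0 : ℝ), ψ t = φ t x)
    (hmono : ∀ t ≥ (0 : ℝ), ∀ x y : Fin n → ℝ, x ≤ y → φ t x ≤ φ t y)
    (xs : Fin n → ℝ) (hfix : ∀ t ≥ (0 : ℝ), φ t xs = xs)
    (B : Set (Fin n → ℝ))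
    (hB : B = {x | Tendsto (fun t => φ t x) atTop (𝓝 xs)})
    (l1 : ℝ) (hl1 : l1 < 0)
    (s1 : (Fin n → ℝ) → ℝ)
    (hs1 : ContDiffOn ℝ 1 s1 B)
    (hinc : ∀ x ∈ B, ∀ y ∈ B, x ≤ y → s1 x ≤ s1 y)
    (heig : ∀ x ∈ B, fderiv ℝ s1 x (f x) = l1 * s1 x)
    (hzero : ∀ x ∈ B, xs ≤ x → s1 x = 0 → x = xs) :
    (∀ x ∈ {y : Fin n → ℝ | xs ≤ y} ∩ B, ∀ t ≥ (0 : ℝ),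
        φ t x ∈ {y : Fin n → ℝ | xs ≤ y} ∩ B) ∧
    (s1 xs = 0 ∧ ∀ x ∈ {y : Fin n → ℝ | xs ≤ y} ∩ B, x ≠ xs → 0 < s1 x) ∧
    (∀ x ∈ {y : Fin n → ℝ | xs ≤ y} ∩ B, x ≠ xs → l1 * s1 x < 0) :=
  eigenfunction_is_lyapunov_on_upper_cone_general f φ hd huniq hmono xs hfix B hB l1 hl1 s1 hinc
    heig hzero
end

section
/- Let φ be a monotone semiflow on ℝⁿ, let x* be an asymptotically stable fixed point with basin of attraction B, let λ₁ < 0, and let s₁ : B → ℝ be an increasing function (x ⪯ y implies s₁(x) ≤ s₁(y) for x, y ∈ B) satisfying s₁(φ(t,x)) = e^{λ₁ t} s₁(x) for all x ∈ B and t ≥ 0. For α ≥ 0 define B_α = {x ∈ B : |s₁(x)| ≤ α}. Then for every α ≥ 0 (and also for B itself, corresponding to α = ∞): B_α is forward invariant (φ(t, x) ∈ B_α for all x ∈ B_α, t ≥ 0), B_α is order-convex, and B_α is a connected set. -/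
open Filter Topology

lemma conn_of_star {β : Type*} [TopologicalSpace β] {S : Set β} {p : β} (hp : p ∈ S)
    (C : β → Set β) (hmem : ∀ x ∈ S, x ∈ C x) (hpC : ∀ x ∈ S, p ∈ C x)
    (hsub : ∀ x ∈ S, C x ⊆ S) (hconn : ∀ x ∈ S, IsPreconnected (C x)) : IsConnected S := by
  refine ⟨⟨p, hp⟩, ?_⟩
  have hS : S = ⋃₀ (C '' S) := by
    apply subset_antisymm
    · exact fun x hx => ⟨C x, ⟨x, hx, rfl⟩, hmem x hx⟩
    · rintro x ⟨s, ⟨y, hy, rfl⟩, hxs⟩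
      exact hsub y hy hxs
  rw [hS]
  apply isPreconnected_sUnion p
  · rintro s ⟨y, hy, rfl⟩; exact hpC y hy
  · rintro s ⟨y, hy, rfl⟩; exact hconn y hy

/-- For a monotone semiflow `φ` on `ℝⁿ` with an asymptotically stable fixed
point `x*` with basin `B`, `λ₁ < 0`, and an increasing function `s₁ : B → ℝ` satisfying
`s₁ (φ t x) = e^{λ₁ t} s₁ x`, every sublevel set `B_α = {x ∈ B | |s₁ x| ≤ α}` (for `α ≥ 0`)
is forward invariant, order-convex and connected, and the same three properties hold for
`B` itself (the case `α = ∞`). -/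
theorem isostable_sublevel_sets_properties {n : ℕ}
    (φ : ℝ → (Fin n → ℝ) → (Fin n → ℝ))
    (hcont : Continuous fun q : ℝ × (Fin n → ℝ) => φ q.1 q.2)
    (h0 : ∀ x, φ 0 x = x)
    (hsemi : ∀ t ≥ (0 : ℝ), ∀ s ≥ (0 : ℝ), ∀ x, φ (t + s) x = φ t (φ s x))
    (hmono : ∀ t ≥ (0 : ℝ), ∀ x y : Fin n → ℝ, x ≤ y → φ t x ≤ φ t y)
    (xs : Fin n → ℝ) (hfix : ∀ t ≥ (0 : ℝ), φ t xs = xs)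
    (B : Set (Fin n → ℝ))
    (hB : B = {x | Tendsto (fun t => φ t x) atTop (𝓝 xs)})
    -- asymptotic stability: Lyapunov stability and the basin is a neighborhood of `xs`
    (hstab : ∀ ε > (0 : ℝ), ∃ δ > (0 : ℝ), ∀ x, dist x xs < δ →
      ∀ t ≥ (0 : ℝ), dist (φ t x) xs < ε)
    (hnbhd : B ∈ 𝓝 xs)
    (l1 : ℝ) (hl1 : l1 < 0)
    (s1 : (Fin n → ℝ) → ℝ)
    (hinc : ∀ x ∈ B, ∀ y ∈ B, x ≤ y → s1 x ≤ s1 y)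
    (heig : ∀ x ∈ B, ∀ t ≥ (0 : ℝ), s1 (φ t x) = Real.exp (l1 * t) * s1 x) :
    (∀ α ≥ (0 : ℝ),
      (∀ x ∈ {x ∈ B | |s1 x| ≤ α}, ∀ t ≥ (0 : ℝ), φ t x ∈ {x ∈ B | |s1 x| ≤ α}) ∧
      (∀ x ∈ {x ∈ B | |s1 x| ≤ α}, ∀ y ∈ {x ∈ B | |s1 x| ≤ α},
        Set.Icc x y ⊆ {x ∈ B | |s1 x| ≤ α}) ∧
      IsConnected {x ∈ B | |s1 x| ≤ α}) ∧
    ((∀ x ∈ B, ∀ t ≥ (0 : ℝ), φ t x ∈ B) ∧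
      (∀ x ∈ B, ∀ y ∈ B, Set.Icc x y ⊆ B) ∧
      IsConnected B) := by
  -- xs belongs to B
  have hxsB : xs ∈ B := by
    rw [hB]
    refine tendsto_const_nhds.congr' ?_
    filter_upwards [eventually_ge_atTop (0:ℝ)] with t ht
    exact (hfix t ht).symm
  -- forward invariance of B
  have hfwdB : ∀ x ∈ B, ∀ t ≥ (0:ℝ), φ t x ∈ B := by
    intro x hx t ht
    rw [hB] at hx ⊢
    have h1 : Tendsto (fun s => φ (s + t) x) atTop (𝓝 xs) :=
      hx.comp (tendsto_atTop_add_const_right atTop t tendsto_id)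
    refine h1.congr' ?_
    filter_upwards [eventually_ge_atTop (0:ℝ)] with s hs
    exact hsemi s hs t ht x
  -- order convexity of B
  have hordB : ∀ x ∈ B, ∀ y ∈ B, Set.Icc x y ⊆ B := by
    intro x hx y hy z hz
    rw [hB] at hx hy ⊢
    rw [Set.mem_setOf_eq, tendsto_pi_nhds] at hx hy ⊢
    intro i
    apply tendsto_of_tendsto_of_tendsto_of_le_of_le' (hx i) (hy i)
    · filter_upwards [eventually_ge_atTop (0:ℝ)] with t ht
      exact hmono t ht x z hz.1 i
    · filter_upwards [eventually_ge_atTop (0:ℝ)] with t ht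
      exact hmono t ht z y hz.2 i
  -- s1 vanishes at xs
  have hs1xs : s1 xs = 0 := by
    have h := heig xs hxsB 1 zero_le_one
    rw [hfix 1 zero_le_one, mul_one] at h
    have he : Real.exp l1 < 1 := by
      rw [Real.exp_lt_one_iff] at *
      exact hl1
    nlinarith [Real.exp_pos l1]
  -- trajectories (with xs attached) are preconnected
  have htraj_pc : ∀ x ∈ B, IsPreconnected ((fun t => φ t x) '' Set.Ici 0 ∪ {xs}) := by
    intro x hx
    have hc : Continuous fun t => φ t x :=
      hcont.comp (continuous_id.prodMk continuous_const)
    have himg : IsPreconnected ((fun t => φ t x) '' Set.Ici 0) :=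
      isPreconnected_Ici.image _ hc.continuousOn
    refine himg.subset_closure Set.subset_union_left ?_
    rintro z (hz | hz)
    · exact subset_closure hz
    · rw [Set.mem_singleton_iff] at hz
      rw [hz]
      have htd : Tendsto (fun t => φ t x) atTop (𝓝 xs) := by
        rw [hB] at hx; exact hx
      refine mem_closure_of_tendsto htd ?_
      filter_upwards [eventually_ge_atTop (0:ℝ)] with t ht
      exact ⟨t, ht, rfl⟩
  -- generic connectedness of forward invariant subsets of B containing xs
  have hconnS : ∀ S : Set (Fin n → ℝ), xs ∈ S → S ⊆ B →
      (∀ x ∈ S, ∀ t ≥ (0:ℝ), φ t x ∈ S) → IsConnected S := by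
    intro S hxsS hSB hinv
    apply conn_of_star hxsS (fun x => (fun t => φ t x) '' Set.Ici 0 ∪ {xs})
    · intro x _; left; exact ⟨0, Set.self_mem_Ici, h0 x⟩
    · intro x _; right; rfl
    · intro x hx
      rintro z (⟨t, ht, rfl⟩ | hz)
      · exact hinv x hx t ht
      · rw [Set.mem_singleton_iff] at hz; subst hz; exact hxsS
    · intro x hx; exact htraj_pc x (hSB hx)
  constructor
  · intro α hα
    have hfwdα : ∀ x ∈ {x ∈ B | |s1 x| ≤ α}, ∀ t ≥ (0:ℝ), φ t x ∈ {x ∈ B | |s1 x| ≤ α} := by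
      rintro x ⟨hxB, hxα⟩ t ht
      refine ⟨hfwdB x hxB t ht, ?_⟩
      rw [heig x hxB t ht, abs_mul, abs_of_pos (Real.exp_pos _)]
      have hexp : Real.exp (l1 * t) ≤ 1 := by
        rw [Real.exp_le_one_iff]
        exact mul_nonpos_of_nonpos_of_nonneg hl1.le ht
      calc Real.exp (l1 * t) * |s1 x| ≤ 1 * |s1 x| :=
            mul_le_mul_of_nonneg_right hexp (abs_nonneg _)
        _ = |s1 x| := one_mul _
        _ ≤ α := hxα
    refine ⟨hfwdα, ?_, ?_⟩
    · rintro x ⟨hxB, hxα⟩ y ⟨hyB, hyα⟩ z hz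
      have hzB : z ∈ B := hordB x hxB y hyB hz
      refine ⟨hzB, abs_le.mpr ⟨?_, ?_⟩⟩
      · exact le_trans (abs_le.mp hxα).1 (hinc x hxB z hzB hz.1)
      · exact le_trans (hinc z hzB y hyB hz.2) (abs_le.mp hyα).2
    · apply hconnS
      · exact ⟨hxsB, by rw [hs1xs]; simpa using hα⟩
      · exact fun x hx => hx.1
      · exact hfwdα
  · exact ⟨hfwdB, hordB, hconnS B hxsB (fun _ h => h) hfwdB⟩
end

section
/- Let A ⊆ ℝⁿ be any set and define ∂₊A = {y ∈ frontier(A) : for every z with y ≪ z one has z ∉ A} and ∂₋A = {y ∈ frontier(A) : for every z with z ≪ y one has z ∉ A}. Then ∂₊A contains no two points x, y with x ≫ y, and ∂₋A contains no two points x, y with x ≫ y. -/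
lemma open_above {n : ℕ} (a : Fin n → ℝ) : IsOpen {z : Fin n → ℝ | ∀ i, a i < z i} := by
  have : {z : Fin n → ℝ | ∀ i, a i < z i} = ⋂ i, (fun z : Fin n → ℝ => z i) ⁻¹' Set.Ioi (a i) := by
    ext z; simp [Set.mem_iInter]
  rw [this]
  exact isOpen_iInter_of_finite fun i => isOpen_Ioi.preimage (continuous_apply i)

lemma open_below {n : ℕ} (a : Fin n → ℝ) : IsOpen {z : Fin n → ℝ | ∀ i, z i < a i} := by
  have : {z : Fin n → ℝ | ∀ i, z i < a i} = ⋂ i, (fun z : Fin n → ℝ => z i) ⁻¹' Set.Iio (a i) := by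
    ext z; simp [Set.mem_iInter]
  rw [this]
  exact isOpen_iInter_of_finite fun i => isOpen_Iio.preimage (continuous_apply i)

/-- For any set `A ⊆ ℝⁿ`, the set of maximal boundary elements
`∂₊A = {y ∈ frontier A | ∀ z, y ≪ z → z ∉ A}` contains no two points `x ≫ y`, and the same
holds for the set of minimal boundary elements `∂₋A = {y ∈ frontier A | ∀ z, z ≪ y → z ∉ A}`. -/
theorem no_strongly_ordered_pairs_in_extremal_boundaries {n : ℕ}
    (A : Set (Fin n → ℝ)) :
    (∀ x ∈ {y ∈ frontier A | ∀ z : Fin n → ℝ, (∀ i, y i < z i) → z ∉ A},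
      ∀ y ∈ {y ∈ frontier A | ∀ z : Fin n → ℝ, (∀ i, y i < z i) → z ∉ A},
        ¬ (∀ i, y i < x i)) ∧
    (∀ x ∈ {y ∈ frontier A | ∀ z : Fin n → ℝ, (∀ i, z i < y i) → z ∉ A},
      ∀ y ∈ {y ∈ frontier A | ∀ z : Fin n → ℝ, (∀ i, z i < y i) → z ∉ A},
        ¬ (∀ i, y i < x i)) := by
  constructor
  · rintro x ⟨hxf, _⟩ y ⟨_, hy⟩ hlt
    have hxc : x ∈ closure A := frontier_subset_closure hxf
    obtain ⟨z, hzU, hzA⟩ := _root_.mem_closure_iff.mp hxc _ (open_above y) hlt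
    exact hy z hzU hzA
  · rintro x ⟨_, hx⟩ y ⟨hyf, _⟩ hlt
    have hyc : y ∈ closure A := frontier_subset_closure hyf
    obtain ⟨z, hzU, hzA⟩ := _root_.mem_closure_iff.mp hyc _ (open_below x) hlt
    exact hx z hzU hzA
end

section
/- Let B ⊆ ℝⁿ be open and let s₁ : B → ℝ be continuous and strictly increasing, i.e. s₁(x) < s₁(y) whenever x, y ∈ B and x ≺ y. Fix α ≥ 0 and set B_α = {x ∈ B : |s₁(x)| ≤ α}. Call y ∈ B_α a minimal element of B_α if there is no w ∈ B_α with w ≪ y, and a maximal element of B_α if there is no w ∈ B_α with y ≪ w. Then there do not exist two minimal elements x, y of B_α with x ≻ y, and there do not exist two maximal elements x, y of B_α with x ≻ y. (Indeed, s₁ equals −α at every minimal element and +α at every maximal element.) -/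
/-- Let `B ⊆ ℝⁿ` be open and `s₁ : B → ℝ` be continuous and strictly
increasing (`x ≺ y` implies `s₁ x < s₁ y`). Fix `α ≥ 0` and let
`B_α = {x ∈ B | |s₁ x| ≤ α}`. Then no two minimal elements `x, y` of `B_α` satisfy `x ≻ y`,
no two maximal elements `x, y` of `B_α` satisfy `x ≻ y`; indeed `s₁ = -α` at every minimal
element and `s₁ = α` at every maximal element. -/
theorem minimal_maximal_elements_of_isostable_sublevel {n : ℕ}
    (B : Set (Fin n → ℝ)) (hB : IsOpen B)
    (s1 : (Fin n → ℝ) → ℝ) (hcont : ContinuousOn s1 B)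
    (hinc : ∀ x ∈ B, ∀ y ∈ B, x < y → s1 x < s1 y)
    (α : ℝ) (hα : 0 ≤ α) :
    (∀ x ∈ {z ∈ B | |s1 z| ≤ α}, ∀ y ∈ {z ∈ B | |s1 z| ≤ α},
      (∀ w ∈ {z ∈ B | |s1 z| ≤ α}, ¬ (∀ i, w i < x i)) →
      (∀ w ∈ {z ∈ B | |s1 z| ≤ α}, ¬ (∀ i, w i < y i)) → ¬ y < x) ∧
    (∀ x ∈ {z ∈ B | |s1 z| ≤ α}, ∀ y ∈ {z ∈ B | |s1 z| ≤ α},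
      (∀ w ∈ {z ∈ B | |s1 z| ≤ α}, ¬ (∀ i, x i < w i)) →
      (∀ w ∈ {z ∈ B | |s1 z| ≤ α}, ¬ (∀ i, y i < w i)) → ¬ y < x) ∧
    (∀ y ∈ {z ∈ B | |s1 z| ≤ α},
      (∀ w ∈ {z ∈ B | |s1 z| ≤ α}, ¬ (∀ i, w i < y i)) → s1 y = -α) ∧
    (∀ y ∈ {z ∈ B | |s1 z| ≤ α},
      (∀ w ∈ {z ∈ B | |s1 z| ≤ α}, ¬ (∀ i, y i < w i)) → s1 y = α) := by
  -- key perturbation lemma: move y in direction σ by a small ε, staying in B_α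
  have key : ∀ (σ : ℝ), σ = 1 ∨ σ = -1 → ∀ y, y ∈ B → |s1 y| ≤ α →
      σ * s1 y < α →
      ∃ w, w ∈ B ∧ |s1 w| ≤ α ∧ ∀ i, σ * y i < σ * w i := by
    intro σ hσ y hyB hys hlt
    have hcy : ContinuousAt s1 y := hcont.continuousAt (hB.mem_nhds hyB)
    set T : ℝ → (Fin n → ℝ) := fun ε i => y i + σ * ε with hT
    have hTc : Continuous T := by
      apply continuous_pi
      intro i
      exact continuous_const.add (continuous_const.mul continuous_id)
    have hT0 : T 0 = y := by funext i; simp [hT]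
    have hg : ContinuousAt (fun ε => σ * s1 (T ε)) 0 :=
      continuousAt_const.mul (ContinuousAt.comp (by rw [hT0]; exact hcy) hTc.continuousAt)
    have hBev : ∀ᶠ ε : ℝ in nhds 0, T ε ∈ B :=
      hTc.continuousAt (hB.mem_nhds (by rw [hT0]; exact hyB))
    have hsev : ∀ᶠ ε : ℝ in nhds 0, σ * s1 (T ε) < α := by
      have h2 : (fun ε : ℝ => σ * s1 (T ε)) 0 < α := by simpa [hT0] using hlt
      exact hg.eventually_lt continuousAt_const h2
    have hall : ∀ᶠ ε : ℝ in nhdsWithin 0 (Set.Ioi 0),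
        T ε ∈ B ∧ σ * s1 (T ε) < α ∧ 0 < ε := by
      filter_upwards [nhdsWithin_le_nhds hBev, nhdsWithin_le_nhds hsev,
        self_mem_nhdsWithin] with ε h1 h2 h3
      exact ⟨h1, h2, h3⟩
    obtain ⟨ε, hwB, hws, hε⟩ := hall.exists
    have hσε : 0 < σ * σ * ε := by
      rcases hσ with h | h <;> rw [h] <;> linarith
    refine ⟨T ε, hwB, ?_, ?_⟩
    · -- |s1 (T ε)| ≤ α
      rcases Nat.eq_zero_or_pos n with h0 | hp
      · have : T ε = y := by funext i; exact absurd i.2 (by omega)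
        rw [this]; exact hys
      rcases hσ with hs | hs
      · -- σ = 1 : y < T ε
        have hlt2 : y < T ε := by
          rw [Pi.lt_def]
          refine ⟨fun i => ?_, ⟨⟨0, hp⟩, ?_⟩⟩ <;> simp [hT, hs] <;> linarith
        have h1 := hinc _ hyB _ hwB hlt2
        rw [hs, one_mul] at hws
        rw [abs_le] at hys ⊢
        exact ⟨by linarith [hys.1], le_of_lt hws⟩
      · -- σ = -1 : T ε < y
        have hlt2 : T ε < y := by
          rw [Pi.lt_def]
          refine ⟨fun i => ?_, ⟨⟨0, hp⟩, ?_⟩⟩ <;> simp [hT, hs] <;> linarith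
        have h1 := hinc _ hwB _ hyB hlt2
        rw [hs, neg_one_mul, neg_lt] at hws
        rw [abs_le] at hys ⊢
        exact ⟨by linarith [hws], by linarith [hys.2]⟩
    · intro i
      have : σ * T ε i = σ * y i + σ * σ * ε := by simp [hT]; ring
      rw [this]; linarith
  have hmin : ∀ y ∈ {z ∈ B | |s1 z| ≤ α},
      (∀ w ∈ {z ∈ B | |s1 z| ≤ α}, ¬ (∀ i, w i < y i)) → s1 y = -α := by
    rintro y ⟨hyB, hys⟩ H
    by_contra hne
    have hlt : -s1 y < α := by
      rw [abs_le] at hys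
      rcases lt_or_eq_of_le hys.1 with h | h
      · linarith
      · exact absurd h.symm hne
    obtain ⟨w, hwB, hws, hwlt⟩ := key (-1) (Or.inr rfl) y hyB hys (by linarith)
    exact H w ⟨hwB, hws⟩ (fun i => by have := hwlt i; linarith)
  have hmax : ∀ y ∈ {z ∈ B | |s1 z| ≤ α},
      (∀ w ∈ {z ∈ B | |s1 z| ≤ α}, ¬ (∀ i, y i < w i)) → s1 y = α := by
    rintro y ⟨hyB, hys⟩ H
    by_contra hne
    have hlt : s1 y < α := by
      rw [abs_le] at hys
      exact lt_of_le_of_ne hys.2 hne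
    obtain ⟨w, hwB, hws, hwlt⟩ := key 1 (Or.inl rfl) y hyB hys (by linarith)
    exact H w ⟨hwB, hws⟩ (fun i => by have := hwlt i; linarith)
  refine ⟨?_, ?_, hmin, hmax⟩
  · intro x hx y hy Hx Hy hlt
    have h1 := hmin x hx Hx
    have h2 := hmin y hy Hy
    have := hinc y hy.1 x hx.1 hlt
    rw [h1, h2] at this; exact lt_irrefl _ this
  · intro x hx y hy Hx Hy hlt
    have h1 := hmax x hx Hx
    have h2 := hmax y hy Hy
    have := hinc y hy.1 x hx.1 hlt
    rw [h1, h2] at this; exact lt_irrefl _ this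
end

section
/- Let φ be a strongly monotone semiflow on ℝⁿ: x ≺ y implies φ(t,x) ≪ φ(t,y) for all t > 0. Assume φ has two asymptotically stable fixed points x* and x• with x* ⪯ x•, that ℝⁿ = closure(B(x*) ∪ B(x•)), and that for every bounded set A ⊆ ℝⁿ the forward orbit O(A) = ⋃_{t ≥ 0} φ(t, A) is bounded. Then the boundary between the two basins, i.e. the set M = ℝⁿ \ (B(x*) ∪ B(x•)), contains no two points x, y with x ≻ y. -/
open Filter Topology

/-- Let `φ` be a strongly monotone semiflow on `ℝⁿ` (`x ≺ y` implies
`φ t x ≪ φ t y` for `t > 0`) with two asymptotically stable fixed points `x* ⪯ x•`, such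
that `ℝⁿ = closure (B(x*) ∪ B(x•))` and forward orbits of bounded sets are bounded. Then
the boundary between the two basins, `M = ℝⁿ \ (B(x*) ∪ B(x•))`, contains no two points
`x ≻ y`. -/
theorem separatrix_unordered_of_strongly_monotone {n : ℕ}
    (φ : ℝ → (Fin n → ℝ) → (Fin n → ℝ))
    (hcont : Continuous fun q : ℝ × (Fin n → ℝ) => φ q.1 q.2)
    (h0 : ∀ x, φ 0 x = x)
    (hsemi : ∀ t ≥ (0 : ℝ), ∀ s ≥ (0 : ℝ), ∀ x, φ (t + s) x = φ t (φ s x))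
    (hsmono : ∀ x y : Fin n → ℝ, x < y → ∀ t > (0 : ℝ), ∀ i, φ t x i < φ t y i)
    (xs xb : Fin n → ℝ) (hle : xs ≤ xb)
    (hfixs : ∀ t ≥ (0 : ℝ), φ t xs = xs)
    (hfixb : ∀ t ≥ (0 : ℝ), φ t xb = xb)
    (Bs Bb : Set (Fin n → ℝ))
    (hBs : Bs = {x | Tendsto (fun t => φ t x) atTop (𝓝 xs)})
    (hBb : Bb = {x | Tendsto (fun t => φ t x) atTop (𝓝 xb)})
    -- asymptotic stability of both fixed points
    (hstabs : ∀ ε > (0 : ℝ), ∃ δ > (0 : ℝ), ∀ x, dist x xs < δ →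
      ∀ t ≥ (0 : ℝ), dist (φ t x) xs < ε)
    (hnbhds : Bs ∈ 𝓝 xs)
    (hstabb : ∀ ε > (0 : ℝ), ∃ δ > (0 : ℝ), ∀ x, dist x xb < δ →
      ∀ t ≥ (0 : ℝ), dist (φ t x) xb < ε)
    (hnbhdb : Bb ∈ 𝓝 xb)
    (hcover : (Set.univ : Set (Fin n → ℝ)) = closure (Bs ∪ Bb))
    (hbdd : ∀ A : Set (Fin n → ℝ), Bornology.IsBounded A →
      Bornology.IsBounded (⋃ t ∈ Set.Ici (0 : ℝ), φ t '' A)) :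
    ∀ x ∈ (Bs ∪ Bb)ᶜ, ∀ y ∈ (Bs ∪ Bb)ᶜ, ¬ y < x := by
  intro x hx y hy hyx
  -- the case n = 0 is trivial
  rcases Nat.eq_zero_or_pos n with hn | hn
  · subst hn
    exact absurd (funext fun i : Fin 0 => i.elim0 : y = x) hyx.ne
  have lt_of_forall : ∀ a b : Fin n → ℝ, (∀ i, a i < b i) → a < b := by
    intro a b h
    exact lt_of_le_of_ne (fun i => (h i).le)
      (fun e => absurd (congrFun e ⟨0, hn⟩) (h ⟨0, hn⟩).ne)
  -- limit comparison lemma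
  have comp_le : ∀ a c p q : Fin n → ℝ, a < c →
      Tendsto (fun t => φ t a) atTop (𝓝 p) →
      Tendsto (fun t => φ t c) atTop (𝓝 q) → p ≤ q := by
    intro a c p q hac ha hc i
    refine le_of_tendsto_of_tendsto (tendsto_pi_nhds.1 ha i) (tendsto_pi_nhds.1 hc i) ?_
    filter_upwards [eventually_gt_atTop 0] with t ht
    exact (hsmono a c hac t ht i).le
  -- squeeze lemma
  have squeeze : ∀ a b c p : Fin n → ℝ, a < b → b < c →
      Tendsto (fun t => φ t a) atTop (𝓝 p) →
      Tendsto (fun t => φ t c) atTop (𝓝 p) →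
      Tendsto (fun t => φ t b) atTop (𝓝 p) := by
    intro a b c p hab hbc ha hc
    rw [tendsto_pi_nhds]
    intro i
    refine tendsto_of_tendsto_of_tendsto_of_le_of_le'
      (tendsto_pi_nhds.1 ha i) (tendsto_pi_nhds.1 hc i) ?_ ?_
    · filter_upwards [eventually_gt_atTop 0] with t ht
      exact (hsmono a b hab t ht i).le
    · filter_upwards [eventually_gt_atTop 0] with t ht
      exact (hsmono b c hbc t ht i).le
  -- shifting time by 1 preserves limits
  have hshift : ∀ (v p : Fin n → ℝ),
      Tendsto (fun t => φ t (φ 1 v)) atTop (𝓝 p) →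
      Tendsto (fun t => φ t v) atTop (𝓝 p) := by
    intro v p h
    have h2 : Tendsto (fun t => φ (t + 1) v) atTop (𝓝 p) := by
      refine h.congr' ?_
      filter_upwards [eventually_ge_atTop (0 : ℝ)] with t ht
      exact (hsemi t ht 1 one_pos.le v).symm
    have h3 := h2.comp (tendsto_atTop_add_const_right atTop (-1 : ℝ) tendsto_id)
    refine h3.congr fun t => ?_
    simp only [Function.comp]
    norm_num
  set y' := φ 1 y with hy'def
  set x' := φ 1 x with hx'def
  have hyx' : ∀ i, y' i < x' i := hsmono y x hyx 1 one_pos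
  -- y', x' are still outside the basins
  have hy' : y' ∉ Bs ∪ Bb := by
    intro h
    refine hy ?_
    rcases h with h | h
    · rw [hBs] at h; exact Or.inl (hBs ▸ hshift y xs h)
    · rw [hBb] at h; exact Or.inr (hBb ▸ hshift y xb h)
  have hx' : x' ∉ Bs ∪ Bb := by
    intro h
    refine hx ?_
    rcases h with h | h
    · rw [hBs] at h; exact Or.inl (hBs ▸ hshift x xs h)
    · rw [hBb] at h; exact Or.inr (hBb ▸ hshift x xb h)
  have hdense : Dense (Bs ∪ Bb) := by
    rw [dense_iff_closure_eq]; exact hcover.symm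
  -- pick w ≪ y'
  obtain ⟨w, hwmem, hw⟩ := hdense.exists_mem_open
    (isOpen_set_pi Set.finite_univ (fun i _ => isOpen_Iio (a := y' i)))
    ⟨fun i => y' i - 1, by simp [Set.mem_univ_pi]⟩
  -- pick z with y' ≪ z ≪ x'
  obtain ⟨z, hzmem, hz⟩ := hdense.exists_mem_open
    (isOpen_set_pi Set.finite_univ (fun i _ => isOpen_Ioo (a := y' i) (b := x' i)))
    ⟨fun i => (y' i + x' i) / 2, by
      simp only [Set.mem_univ_pi, Set.mem_Ioo]
      intro i
      constructor <;> linarith [hyx' i]⟩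
  -- pick u ≫ x'
  obtain ⟨u, humem, hu⟩ := hdense.exists_mem_open
    (isOpen_set_pi Set.finite_univ (fun i _ => isOpen_Ioi (a := x' i)))
    ⟨fun i => x' i + 1, by simp [Set.mem_univ_pi]⟩
  rw [Set.mem_univ_pi] at hw hz hu
  have hwy' : w < y' := lt_of_forall _ _ fun i => hw i
  have hy'z : y' < z := lt_of_forall _ _ fun i => (hz i).1
  have hzx' : z < x' := lt_of_forall _ _ fun i => (hz i).2
  have hx'u : x' < u := lt_of_forall _ _ fun i => hu i
  rw [hBs, hBb] at hwmem hzmem humem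
  rcases hzmem with hzt | hzt
  · -- z → xs ; squeeze y' between w and z
    rcases hwmem with hwt | hwt
    · exact hy' (Or.inl (hBs ▸ squeeze w y' z xs hwy' hy'z hwt hzt))
    · have heq : xs = xb :=
        le_antisymm hle (comp_le w z xb xs (hwy'.trans hy'z) hwt hzt)
      rw [← heq] at hwt
      exact hy' (Or.inl (hBs ▸ squeeze w y' z xs hwy' hy'z hwt hzt))
  · -- z → xb ; squeeze x' between z and u
    rcases humem with hut | hut
    · have heq : xs = xb :=
        le_antisymm hle (comp_le z u xb xs (hzx'.trans hx'u) hzt hut)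
      rw [heq] at hut
      exact hx' (Or.inr (hBb ▸ squeeze z x' u xb hzx' hx'u hzt hut))
    · exact hx' (Or.inr (hBb ▸ squeeze z x' u xb hzx' hx'u hzt hut))
end

section
/- Let φ be a semiflow on ℝⁿ whose fixed point x* has basin of attraction B, let λ₁, …, λ_n be complex numbers with Re(λ_i) < 0 for all i, and let s_i : B → ℂ, i = 1, …, n, be continuous functions satisfying s_i(φ(t,x)) = e^{λ_i t} s_i(x) for all x ∈ B and t ≥ 0. Assume that the common zero set ⋂_i {x ∈ B : s_i(x) = 0} equals {x*}. Fix p ≥ 1 and positive weights β_1, …, β_n, and define W(x) = (Σ_i β_i |s_i(x)|^p)^{1/p} for x ∈ B. Then: (1) W(x*) = 0 and W(x) > 0 for all x ∈ B \ {x*}; (2) W decays exponentially along trajectories: W(φ(t,x)) ≤ e^{λ̄ t} W(x) for all x ∈ B and t ≥ 0, where λ̄ = max_i Re(λ_i) < 0; in particular t ↦ W(φ(t,x)) is strictly decreasing for every x ∈ B \ {x*}, so W is a Lyapunov function on B. -/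
open Filter Topology

/-!
Along a trajectory in the basin each eigenfunction evolves explicitly,
`|s_i(φ(t,x))| = e^{Re λ_i t} |s_i(x)|`, so `t ↦ W(φ(t,x))` is a weighted `ℓ^p` norm of
exponentially decaying moduli. Exponential decay then follows from monotonicity and positive
homogeneity of the weighted `ℓ^p` norm, strict decrease from its strict monotonicity in a
nonzero coordinate, and positivity off `x*` from the common-zero-set hypothesis.
-/

noncomputable def weightedLpNorm {ι E : Type*} [Fintype ι] [Norm E] (p : ℝ) (b : ι → ℝ)
    (v : ι → E) : ℝ :=
  (∑ i, b i * ‖v i‖ ^ p) ^ (1 / p)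

section WeightedLpNorm

variable {ι E : Type*} [Fintype ι] {p : ℝ} {b : ι → ℝ}

theorem weightedLpNorm_zero [NormedAddGroup E] (hp : p ≠ 0) :
    weightedLpNorm p b (0 : ι → E) = 0 := by
  simp [weightedLpNorm, Real.zero_rpow hp, inv_ne_zero hp]

theorem weightedLpNorm_pos [NormedAddGroup E] (hb : ∀ i, 0 < b i) {v : ι → E} (hv : v ≠ 0) :
    0 < weightedLpNorm p b v := by
  obtain ⟨i, hi⟩ := Function.ne_iff.mp hv
  refine Real.rpow_pos_of_pos (Finset.sum_pos' (fun j _ => ?_) ⟨i, Finset.mem_univ i, ?_⟩) _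
  · exact mul_nonneg (hb j).le (Real.rpow_nonneg (norm_nonneg _) p)
  · exact mul_pos (hb i) (Real.rpow_pos_of_pos (norm_pos_iff.mpr hi) p)

theorem weightedLpNorm_le_mul [SeminormedAddGroup E] (hp : 0 < p) (hb : ∀ i, 0 ≤ b i)
    {v w : ι → E} {c : ℝ} (hc : 0 ≤ c) (h : ∀ i, ‖v i‖ ≤ c * ‖w i‖) :
    weightedLpNorm p b v ≤ c * weightedLpNorm p b w := by
  have hnonneg (u : ι → E) : 0 ≤ ∑ i, b i * ‖u i‖ ^ p :=
    Finset.sum_nonneg fun i _ => mul_nonneg (hb i) (Real.rpow_nonneg (norm_nonneg _) p)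
  have hsum : ∑ i, b i * ‖v i‖ ^ p ≤ c ^ p * ∑ i, b i * ‖w i‖ ^ p := by
    rw [Finset.mul_sum]
    refine Finset.sum_le_sum fun i _ => ?_
    calc b i * ‖v i‖ ^ p ≤ b i * (c * ‖w i‖) ^ p :=
          mul_le_mul_of_nonneg_left (Real.rpow_le_rpow (norm_nonneg _) (h i) hp.le) (hb i)
      _ = c ^ p * (b i * ‖w i‖ ^ p) := by
          rw [Real.mul_rpow hc (norm_nonneg _)]
          ring
  calc weightedLpNorm p b v ≤ (c ^ p * ∑ i, b i * ‖w i‖ ^ p) ^ (1 / p) :=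
        Real.rpow_le_rpow (hnonneg v) hsum (by positivity)
    _ = c * weightedLpNorm p b w := by
        rw [Real.mul_rpow (Real.rpow_nonneg hc p) (hnonneg w), one_div,
          Real.rpow_rpow_inv hc hp.ne', weightedLpNorm, one_div]

theorem weightedLpNorm_lt [SeminormedAddGroup E] (hp : 0 < p) (hb : ∀ i, 0 < b i)
    {v w : ι → E} (hle : ∀ i, ‖v i‖ ≤ ‖w i‖) (hlt : ∃ i, ‖v i‖ < ‖w i‖) :
    weightedLpNorm p b v < weightedLpNorm p b w := by
  obtain ⟨i, hi⟩ := hlt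
  have hsum : ∑ i, b i * ‖v i‖ ^ p < ∑ i, b i * ‖w i‖ ^ p :=
    Finset.sum_lt_sum
      (fun j _ => mul_le_mul_of_nonneg_left
        (Real.rpow_le_rpow (norm_nonneg _) (hle j) hp.le) (hb j).le)
      ⟨i, Finset.mem_univ i,
        mul_lt_mul_of_pos_left (Real.rpow_lt_rpow (norm_nonneg _) hi hp) (hb i)⟩
  exact Real.rpow_lt_rpow
    (Finset.sum_nonneg fun j _ => mul_nonneg (hb j).le (Real.rpow_nonneg (norm_nonneg _) p))
    hsum (by positivity)

end WeightedLpNorm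

theorem norm_cexp_mul_ofReal_mul (l z : ℂ) (t : ℝ) :
    ‖Complex.exp (l * t) * z‖ = Real.exp (l.re * t) * ‖z‖ := by
  rw [norm_mul, Complex.norm_exp, Complex.re_mul_ofReal]

section ExponentialModes

variable {ι : Type*} [Fintype ι] {p : ℝ} {b : ι → ℝ} {l z : ι → ℂ}

theorem weightedLpNorm_cexp_mul_le (hp : 0 < p) (hb : ∀ i, 0 ≤ b i) {c t : ℝ}
    (hl : ∀ i, (l i).re ≤ c) (ht : 0 ≤ t) :
    weightedLpNorm p b (fun i => Complex.exp (l i * t) * z i)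
      ≤ Real.exp (c * t) * weightedLpNorm p b z :=
  weightedLpNorm_le_mul hp hb (Real.exp_pos _).le fun i => by
    rw [norm_cexp_mul_ofReal_mul]
    gcongr
    exact hl i

theorem strictAnti_weightedLpNorm_cexp_mul (hp : 0 < p) (hb : ∀ i, 0 < b i)
    (hl : ∀ i, (l i).re < 0) (hz : z ≠ 0) :
    StrictAnti fun t : ℝ => weightedLpNorm p b (fun i => Complex.exp (l i * t) * z i) := by
  intro t₁ t₂ ht
  obtain ⟨i, hi⟩ := Function.ne_iff.mp hz
  refine weightedLpNorm_lt hp hb (fun j => ?_) ⟨i, ?_⟩ <;> simp only [norm_cexp_mul_ofReal_mul]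
  · exact mul_le_mul_of_nonneg_right
      (Real.exp_le_exp.mpr (mul_le_mul_of_nonpos_left ht.le (hl j).le)) (norm_nonneg _)
  · exact mul_lt_mul_of_pos_right
      (Real.exp_lt_exp.mpr (mul_lt_mul_of_neg_left ht (hl i))) (norm_pos_iff.mpr hi)

end ExponentialModes

theorem koopman_weighted_norm_is_lyapunov_general {n : ℕ}
    (φ : ℝ → (Fin n → ℝ) → (Fin n → ℝ))
    (xs : Fin n → ℝ)
    (B : Set (Fin n → ℝ))
    (l : Fin n → ℂ) (hl : ∀ i, (l i).re < 0)
    (s : Fin n → (Fin n → ℝ) → ℂ)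
    (heig : ∀ i, ∀ x ∈ B, ∀ t ≥ (0 : ℝ), s i (φ t x) = Complex.exp (l i * t) * s i x)
    (hzero : (⋂ i, {x ∈ B | s i x = 0}) = {xs})
    (p : ℝ) (hp : 1 ≤ p)
    (b : Fin n → ℝ) (hb : ∀ i, 0 < b i)
    (W : (Fin n → ℝ) → ℝ)
    (hW : ∀ x, W x = (∑ i, b i * ‖s i x‖ ^ p) ^ (1 / p)) :
    W xs = 0 ∧
    (∀ x ∈ B, x ≠ xs → 0 < W x) ∧
    (∀ x ∈ B, ∀ t ≥ (0 : ℝ), W (φ t x) ≤ Real.exp ((⨆ i, (l i).re) * t) * W x) ∧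
    (∀ x ∈ B, x ≠ xs → StrictAntiOn (fun t => W (φ t x)) (Set.Ici (0 : ℝ))) := by
  have hp₀ : 0 < p := by linarith
  have hW' : ∀ x, W x = weightedLpNorm p b (fun i => s i x) := hW
  have hxs : (fun i => s i xs) = 0 := by
    have : xs ∈ ⋂ i, {x ∈ B | s i x = 0} := hzero ▸ rfl
    exact funext fun i => (Set.mem_iInter.mp this i).2
  have hne_zero : ∀ x ∈ B, x ≠ xs → (fun i => s i x) ≠ 0 := fun x hx hne h =>
    hne <| Set.mem_singleton_iff.mp <| hzero ▸ Set.mem_iInter.mpr fun i => ⟨hx, congrFun h i⟩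
  have htraj : ∀ x ∈ B, ∀ t ≥ (0 : ℝ),
      W (φ t x) = weightedLpNorm p b (fun i => Complex.exp (l i * t) * s i x) :=
    fun x hx t ht => by simp only [hW', heig _ x hx t ht]
  refine ⟨?_, fun x hx hne => ?_, fun x hx t ht => ?_, fun x hx hne t₁ ht₁ t₂ ht₂ ht => ?_⟩
  · rw [hW', hxs, weightedLpNorm_zero hp₀.ne']
  · rw [hW']
    exact weightedLpNorm_pos hb (hne_zero x hx hne)
  · rw [htraj x hx t ht, hW']
    exact weightedLpNorm_cexp_mul_le hp₀ (fun i => (hb i).le)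
      (fun i => le_ciSup (f := fun i => (l i).re) (Set.finite_range _).bddAbove i) ht
  · simp only [htraj x hx _ ht₁, htraj x hx _ ht₂]
    exact strictAnti_weightedLpNorm_cexp_mul hp₀ hb hl (hne_zero x hx hne) ht

/-- Let `φ` be a semiflow on `ℝⁿ` whose fixed point `x*` has basin `B`, let
`λ₁, …, λ_n ∈ ℂ` have negative real parts, and let `s_i : B → ℂ` be continuous functions
with `s_i (φ t x) = e^{λ_i t} s_i x` whose common zero set in `B` is `{x*}`. For `p ≥ 1`
and positive weights `β_i`, define `W x = (Σ_i β_i |s_i x|^p)^{1/p}`. Then `W x* = 0`,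
`W > 0` on `B \ {x*}`, `W (φ t x) ≤ e^{λ̄ t} W x` where `λ̄ = max_i Re λ_i`, and
`t ↦ W (φ t x)` is strictly decreasing on `[0, ∞)` for every `x ∈ B \ {x*}`; hence `W` is
a Lyapunov function on `B`. -/
theorem koopman_weighted_norm_is_lyapunov {n : ℕ} (hn : 0 < n)
    (φ : ℝ → (Fin n → ℝ) → (Fin n → ℝ))
    (hcont : Continuous fun q : ℝ × (Fin n → ℝ) => φ q.1 q.2)
    (h0 : ∀ x, φ 0 x = x)
    (hsemi : ∀ t ≥ (0 : ℝ), ∀ s ≥ (0 : ℝ), ∀ x, φ (t + s) x = φ t (φ s x))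
    (xs : Fin n → ℝ) (hfix : ∀ t ≥ (0 : ℝ), φ t xs = xs)
    (B : Set (Fin n → ℝ))
    (hB : B = {x | Tendsto (fun t => φ t x) atTop (𝓝 xs)})
    (l : Fin n → ℂ) (hl : ∀ i, (l i).re < 0)
    (s : Fin n → (Fin n → ℝ) → ℂ)
    (hscont : ∀ i, ContinuousOn (s i) B)
    (heig : ∀ i, ∀ x ∈ B, ∀ t ≥ (0 : ℝ), s i (φ t x) = Complex.exp (l i * t) * s i x)
    (hzero : (⋂ i, {x ∈ B | s i x = 0}) = {xs})
    (p : ℝ) (hp : 1 ≤ p)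
    (b : Fin n → ℝ) (hb : ∀ i, 0 < b i)
    (W : (Fin n → ℝ) → ℝ)
    (hW : ∀ x, W x = (∑ i, b i * ‖s i x‖ ^ p) ^ (1 / p)) :
    W xs = 0 ∧
    (∀ x ∈ B, x ≠ xs → 0 < W x) ∧
    (∀ x ∈ B, ∀ t ≥ (0 : ℝ), W (φ t x) ≤ Real.exp ((⨆ i, (l i).re) * t) * W x) ∧
    (∀ x ∈ B, x ≠ xs → StrictAntiOn (fun t => W (φ t x)) (Set.Ici (0 : ℝ))) :=
  koopman_weighted_norm_is_lyapunov_general φ xs B l hl s heig hzero p hp b hb W hW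
end
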